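/- arXiv:2310.02534 — 10 statements merged into one kernel-verified Lean document; each statement's English description precedes it below -/
import Mathlib

section
/- For every t ∈ ℚ, the set of triples (x₁, x₂, x₃) ∈ S′ × S′ × S′ with x₁ · x₂ · x₃ = t is infinite. -/
/-- `S′`: the set of rational numbers `α` such that `α² + 1` is the square of a rational. -/
def Sslope : Set ℚ := {α : ℚ | ∃ q : ℚ, α ^ 2 + 1 = q ^ 2}

namespace Stmt4Aux

local notation "V" => padicValRat 2

lemma vadd {a b : ℚ} (ha : a ≠ 0) (hb : b ≠ 0) (h : V a < V b) :
    a + b ≠ 0 ∧ V (a + b) = V a := by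
  have hne : a + b ≠ 0 := by
    intro h0
    have hb' : b = -a := by linarith
    rw [hb', padicValRat.neg] at h
    exact lt_irrefl _ h
  refine ⟨hne, ?_⟩
  rw [padicValRat.add_eq_min hne ha hb (ne_of_lt h), min_eq_left h.le]

lemma Vtwo_pow (k : ℕ) : V ((2 : ℚ) ^ k) = k := by
  rw [padicValRat.pow _]
  have h2 : V (2 : ℚ) = 1 := by
    have := padicValRat.self (p := 2) (by norm_num)
    simpa using this
  rw [h2]; ring

lemma V64 : V (64 : ℚ) = 6 := by
  have : ((64 : ℚ)) = (2:ℚ) ^ 6 := by norm_num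
  rw [this, Vtwo_pow]; norm_num

lemma V4 : V (4 : ℚ) = 2 := by
  have : ((4 : ℚ)) = (2:ℚ) ^ 2 := by norm_num
  rw [this, Vtwo_pow]; norm_num

lemma V16 : V (16 : ℚ) = 4 := by
  have : ((16 : ℚ)) = (2:ℚ) ^ 4 := by norm_num
  rw [this, Vtwo_pow]; norm_num

lemma Vodd (n : ℕ) (h : ¬ 2 ∣ n) : V ((n : ℚ)) = 0 := by
  rw [padicValRat.of_nat]
  exact_mod_cast padicValNat.eq_zero_of_not_dvd h

lemma V81 : V (81 : ℚ) = 0 := by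
  have := Vodd 81 (by norm_num)
  simpa using this

lemma V9 : V (9 : ℚ) = 0 := by
  have := Vodd 9 (by norm_num)
  simpa using this

lemma V48 : V (48 : ℚ) = 4 := by
  have h : (48 : ℚ) = 16 * 3 := by norm_num
  have h3 : V (3 : ℚ) = 0 := by
    have := Vodd 3 (by norm_num); simpa using this
  rw [h, padicValRat.mul (by norm_num) (by norm_num), V16, h3]
  norm_num

/-- starting point: x-coordinate of 2·(64/9, 512/27) on y² = x³+9t²x²−64t²x -/
def X0 (t : ℚ) : ℚ := ((64 + 81 * t ^ 2) / 48) ^ 2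

def Y0 (t : ℚ) : ℚ := (64 + 27 * t ^ 2) / 16 * (64 / 9 - X0 t) - 512 / 27

def ptseq (t : ℚ) : ℕ → ℚ × ℚ
  | 0 => (X0 t, Y0 t)
  | n + 1 =>
    (((3 * (ptseq t n).1 ^ 2 + 18 * t ^ 2 * (ptseq t n).1 - 64 * t ^ 2) / (2 * (ptseq t n).2)) ^ 2
        - 9 * t ^ 2 - 2 * (ptseq t n).1,
      ((3 * (ptseq t n).1 ^ 2 + 18 * t ^ 2 * (ptseq t n).1 - 64 * t ^ 2) / (2 * (ptseq t n).2)) *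
        ((ptseq t n).1 -
          (((3 * (ptseq t n).1 ^ 2 + 18 * t ^ 2 * (ptseq t n).1 - 64 * t ^ 2) / (2 * (ptseq t n).2)) ^ 2
            - 9 * t ^ 2 - 2 * (ptseq t n).1)) - (ptseq t n).2)

/-- the triple associated to a point (x,y) on the curve -/
def tripleOf (t : ℚ) (P : ℚ × ℚ) : ℚ × ℚ × ℚ :=
  (4 * t * P.1 * (t * P.1 - P.2) / ((t * P.1 + P.2) * (3 * t * P.1 - P.2)),
   (64 * t ^ 2 - P.1 ^ 2) / (16 * t * P.1),
   4 * t * P.1 * (t * P.1 + P.2) / ((t * P.1 - P.2) * (3 * t * P.1 + P.2)))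

/-- consequences of the curve equation and valuation bound -/
lemma aux {t x y : ℚ} (ht : t ≠ 0) (hv : V t ≤ 1) (hx : x ≠ 0)
    (hd : V x ≤ 4 * V t - 8)
    (hy : y ^ 2 = x ^ 3 + 9 * t ^ 2 * x ^ 2 - 64 * t ^ 2 * x) :
    y ≠ 0 ∧
    V (y ^ 2) = 3 * V x ∧
    (x ^ 2 + 64 * t ^ 2 ≠ 0 ∧ V (x ^ 2 + 64 * t ^ 2) = 2 * V x) ∧
    t * x + y ≠ 0 ∧ t * x - y ≠ 0 ∧ 3 * t * x + y ≠ 0 ∧ 3 * t * x - y ≠ 0 := by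
  have ht2 : t ^ 2 ≠ 0 := pow_ne_zero _ ht
  have hVt2 : V (t ^ 2) = 2 * V t := by
    rw [padicValRat.pow _]; ring
  have hx2 : x ^ 2 ≠ 0 := pow_ne_zero _ hx
  have hVx2 : V (x ^ 2) = 2 * V x := by
    rw [padicValRat.pow _]; ring
  -- 9 t² x
  have hB : (9 : ℚ) * t ^ 2 * x ≠ 0 := by positivity
  have hVB : V (9 * t ^ 2 * x) = 2 * V t + V x := by
    rw [padicValRat.mul (by positivity) hx, padicValRat.mul (by norm_num) ht2, V9, hVt2]; ring
  -- 64 t²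
  have hC : (64 : ℚ) * t ^ 2 ≠ 0 := by positivity
  have hVC : V (64 * t ^ 2) = 6 + 2 * V t := by
    rw [padicValRat.mul (by norm_num) ht2, V64, hVt2]
  -- inner sum 9t²x − 64t²
  have hI := vadd hB (a := 9 * t ^ 2 * x) (b := -(64 * t ^ 2)) (by simpa using hC)
    (by rw [padicValRat.neg, hVB, hVC]; linarith)
  have hInner : 9 * t ^ 2 * x + -(64 * t ^ 2) ≠ 0 := hI.1
  have hVInner : V (9 * t ^ 2 * x + -(64 * t ^ 2)) = 2 * V t + V x := by
    rw [hI.2, hVB]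
  -- Q = x² + (9t²x − 64t²)
  have hQ := vadd hx2 hInner (by rw [hVx2, hVInner]; linarith)
  have hQne : x ^ 2 + (9 * t ^ 2 * x + -(64 * t ^ 2)) ≠ 0 := hQ.1
  have hVQ : V (x ^ 2 + (9 * t ^ 2 * x + -(64 * t ^ 2))) = 2 * V x := by rw [hQ.2, hVx2]
  -- y² = x * Q
  have hy' : y ^ 2 = x * (x ^ 2 + (9 * t ^ 2 * x + -(64 * t ^ 2))) := by linear_combination hy
  have hyne : y ≠ 0 := by
    intro h0
    rw [h0] at hy'
    exact (mul_ne_zero hx hQne) (by linarith [hy'])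
  have hVy2 : V (y ^ 2) = 3 * V x := by
    rw [hy', padicValRat.mul hx hQne, hVQ]; ring
  -- x² + 64 t²
  have hD := vadd hx2 hC (by rw [hVx2, hVC]; linarith)
  -- t x ± y, 3 t x ± y
  have htx : t * x ≠ 0 := mul_ne_zero ht hx
  have hVtxsq : V ((t * x) ^ 2) = 2 * V t + 2 * V x := by
    rw [padicValRat.pow _, padicValRat.mul ht hx]; ring
  have hne1 : y ^ 2 ≠ (t * x) ^ 2 := by
    intro h
    have : (3 : ℤ) * V x = 2 * V t + 2 * V x := by rw [← hVy2, h, hVtxsq]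
    have hx2vt : V x = 2 * V t := by linarith
    linarith
  have hV3tx : V ((3 * (t * x)) ^ 2) = 2 * V t + 2 * V x := by
    have h3 : V (3 : ℚ) = 0 := by
      have := Vodd 3 (by norm_num); simpa using this
    rw [padicValRat.pow _, padicValRat.mul (by norm_num) htx,
      padicValRat.mul ht hx, h3]
    ring
  have hne9 : y ^ 2 ≠ (3 * (t * x)) ^ 2 := by
    intro h
    have : (3 : ℤ) * V x = 2 * V t + 2 * V x := by rw [← hVy2, h, hV3tx]
    have hx2vt : V x = 2 * V t := by linarith
    linarith
  refine ⟨hyne, hVy2, ⟨hD.1, by rw [hD.2, hVx2]⟩, ?_, ?_, ?_, ?_⟩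
  · intro h
    exact hne1 (by linear_combination (y - t * x) * h)
  · intro h
    exact hne1 (by linear_combination (-(y + t * x)) * h)
  · intro h
    exact hne9 (by linear_combination (y - 3 * t * x) * h)
  · intro h
    exact hne9 (by linear_combination (-(y + 3 * t * x)) * h)

/-- main invariant, by induction -/
lemma good (t : ℚ) (ht : t ≠ 0) (hv : V t ≤ 1) (n : ℕ) :
    (ptseq t n).1 ≠ 0 ∧
    (ptseq t n).2 ^ 2 = (ptseq t n).1 ^ 3 + 9 * t ^ 2 * (ptseq t n).1 ^ 2
      - 64 * t ^ 2 * (ptseq t n).1 ∧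
    V (ptseq t n).1 = 4 * V t - 8 - 2 * n := by
  have ht2 : t ^ 2 ≠ 0 := pow_ne_zero _ ht
  have hVt2 : V (t ^ 2) = 2 * V t := by rw [padicValRat.pow _]; ring
  induction n with
  | zero =>
    have h81 : (81 : ℚ) * t ^ 2 ≠ 0 := by positivity
    have hV81 : V (81 * t ^ 2) = 2 * V t := by
      rw [padicValRat.mul (by norm_num) ht2, V81, hVt2]; ring
    have hsum := vadd h81 (b := (64 : ℚ)) (by norm_num) (by rw [hV81, V64]; linarith)
    have hne : (64 : ℚ) + 81 * t ^ 2 ≠ 0 := by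
      intro h; exact hsum.1 (by linarith)
    have hVsum : V (64 + 81 * t ^ 2) = 2 * V t := by
      rw [show (64 : ℚ) + 81 * t ^ 2 = 81 * t ^ 2 + 64 by ring, hsum.2, hV81]
    have hxne : X0 t ≠ 0 := by
      unfold X0
      exact pow_ne_zero _ (div_ne_zero hne (by norm_num))
    refine ⟨hxne, ?_, ?_⟩
    · show Y0 t ^ 2 = X0 t ^ 3 + 9 * t ^ 2 * X0 t ^ 2 - 64 * t ^ 2 * X0 t
      unfold Y0 X0
      ring
    · show V (X0 t) = _
      unfold X0
      rw [padicValRat.pow _,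
        padicValRat.div hne (by norm_num), hVsum, V48]
      push_cast
      ring
  | succ n ih =>
    obtain ⟨hx, hy, hVx⟩ := ih
    set x := (ptseq t n).1 with hxdef
    set y := (ptseq t n).2 with hydef
    have hd : V x ≤ 4 * V t - 8 := by
      rw [hVx]; omega
    obtain ⟨hyne, hVy2, ⟨hDne, hVD⟩, _, _, _, _⟩ := aux ht hv hx hd hy
    have h2y : (2 : ℚ) * y ≠ 0 := by positivity
    set L : ℚ := (3 * x ^ 2 + 18 * t ^ 2 * x - 64 * t ^ 2) / (2 * y) with hLdef
    have hL : L * (2 * y) = 3 * x ^ 2 + 18 * t ^ 2 * x - 64 * t ^ 2 :=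
      div_mul_cancel₀ _ h2y
    have hx' : (ptseq t (n + 1)).1 = L ^ 2 - 9 * t ^ 2 - 2 * x := rfl
    have hy' : (ptseq t (n + 1)).2 = L * (x - (L ^ 2 - 9 * t ^ 2 - 2 * x)) - y := rfl
    -- key identity for the new x
    have hxid : (L ^ 2 - 9 * t ^ 2 - 2 * x) * (4 * y ^ 2) = (x ^ 2 + 64 * t ^ 2) ^ 2 := by
      linear_combination (2 * y * L + (3 * x ^ 2 + 18 * t ^ 2 * x - 64 * t ^ 2)) * hL
        - 4 * (9 * t ^ 2 + 2 * x) * hy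
    have h4y2 : (4 : ℚ) * y ^ 2 ≠ 0 := by positivity
    have hxne' : L ^ 2 - 9 * t ^ 2 - 2 * x ≠ 0 := by
      intro h0
      rw [h0, zero_mul] at hxid
      exact pow_ne_zero 2 hDne hxid.symm
    have hV4y2 : V (4 * y ^ 2) = 2 + 3 * V x := by
      rw [padicValRat.mul (by norm_num) (pow_ne_zero _ hyne), V4, hVy2]
    have hVnew : V (L ^ 2 - 9 * t ^ 2 - 2 * x) = V x - 2 := by
      have h1 : V ((L ^ 2 - 9 * t ^ 2 - 2 * x) * (4 * y ^ 2))
          = V (L ^ 2 - 9 * t ^ 2 - 2 * x) + (2 + 3 * V x) := by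
        rw [padicValRat.mul hxne' h4y2, hV4y2]
      have h2 : V ((x ^ 2 + 64 * t ^ 2) ^ 2) = 4 * V x := by
        rw [padicValRat.pow _, hVD]; ring
      rw [hxid, h2] at h1
      linarith
    refine ⟨by rw [hx']; exact hxne', ?_, ?_⟩
    · rw [hx', hy']
      linear_combination (L ^ 2 - 9 * t ^ 2 - 3 * x) * hL + hy
    · rw [hx', hVnew, hVx]
      push_cast
      ring

/-- the triple associated to a good point is in the solution set -/
lemma triple_mem {t x y : ℚ} (ht : t ≠ 0) (hv : V t ≤ 1) (hx : x ≠ 0)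
    (hd : V x ≤ 4 * V t - 8)
    (hy : y ^ 2 = x ^ 3 + 9 * t ^ 2 * x ^ 2 - 64 * t ^ 2 * x) :
    (tripleOf t (x, y)).1 ∈ Sslope ∧ (tripleOf t (x, y)).2.1 ∈ Sslope ∧
    (tripleOf t (x, y)).2.2 ∈ Sslope ∧
    (tripleOf t (x, y)).1 * (tripleOf t (x, y)).2.1 * (tripleOf t (x, y)).2.2 = t := by
  obtain ⟨hyne, hVy2, ⟨hDne, hVD⟩, hp1, hp2, hp3, hp4⟩ := aux ht hv hx hd hy
  have htx : (16 : ℚ) * t * x ≠ 0 := by positivity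
  have hden1 : (t * x + y) * (3 * t * x - y) ≠ 0 := mul_ne_zero hp1 hp4
  have hden3 : (t * x - y) * (3 * t * x + y) ≠ 0 := mul_ne_zero hp2 hp3
  refine ⟨?_, ?_, ?_, ?_⟩
  · refine ⟨(y ^ 2 - 2 * t * x * y + 5 * t ^ 2 * x ^ 2) / ((t * x + y) * (3 * t * x - y)), ?_⟩
    show (4 * t * x * (t * x - y) / ((t * x + y) * (3 * t * x - y))) ^ 2 + 1 = _
    rw [div_pow, div_pow, div_add' _ _ _ (pow_ne_zero 2 hden1), div_eq_div_iff
      (pow_ne_zero 2 hden1) (pow_ne_zero 2 hden1)]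
    ring
  · refine ⟨(64 * t ^ 2 + x ^ 2) / (16 * t * x), ?_⟩
    show ((64 * t ^ 2 - x ^ 2) / (16 * t * x)) ^ 2 + 1 = _
    rw [div_pow, div_pow, div_add' _ _ _ (pow_ne_zero 2 htx), div_eq_div_iff
      (pow_ne_zero 2 htx) (pow_ne_zero 2 htx)]
    ring
  · refine ⟨(y ^ 2 + 2 * t * x * y + 5 * t ^ 2 * x ^ 2) / ((t * x - y) * (3 * t * x + y)), ?_⟩
    show (4 * t * x * (t * x + y) / ((t * x - y) * (3 * t * x + y))) ^ 2 + 1 = _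
    rw [div_pow, div_pow, div_add' _ _ _ (pow_ne_zero 2 hden3), div_eq_div_iff
      (pow_ne_zero 2 hden3) (pow_ne_zero 2 hden3)]
    ring
  · show 4 * t * x * (t * x - y) / ((t * x + y) * (3 * t * x - y)) *
      ((64 * t ^ 2 - x ^ 2) / (16 * t * x)) *
      (4 * t * x * (t * x + y) / ((t * x - y) * (3 * t * x + y))) = t
    rw [div_mul_div_comm, div_mul_div_comm, div_eq_iff (by
      exact mul_ne_zero (mul_ne_zero hden1 htx) hden3)]
    linear_combination (16 * t ^ 2 * x * (t ^ 2 * x ^ 2 - y ^ 2)) * hy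

lemma inv_mem {x : ℚ} (hx : x ∈ Sslope) (hx0 : x ≠ 0) : x⁻¹ ∈ Sslope := by
  obtain ⟨q, hq⟩ := hx
  refine ⟨q * x⁻¹, ?_⟩
  rw [mul_pow]
  rw [← hq]
  field_simp
  ring

/-- main construction for t ≠ 0 with small 2-adic valuation -/
lemma main_aux (t : ℚ) (ht : t ≠ 0) (hv : V t ≤ 1) :
    ∃ g : ℕ → ℚ × ℚ × ℚ, Function.Injective g ∧ ∀ n : ℕ,
      (g n).1 ∈ Sslope ∧ (g n).2.1 ∈ Sslope ∧ (g n).2.2 ∈ Sslope ∧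
      (g n).1 * (g n).2.1 * (g n).2.2 = t := by
  refine ⟨fun n => tripleOf t (ptseq t n), ?_, ?_⟩
  · -- injectivity via the second coordinate and valuations
    intro n m hnm
    by_contra hne
    obtain ⟨hxn, hyn, hVn⟩ := good t ht hv n
    obtain ⟨hxm, hym, hVm⟩ := good t ht hv m
    set xn := (ptseq t n).1
    set xm := (ptseq t m).1
    have h2 : (tripleOf t (ptseq t n)).2.1 = (tripleOf t (ptseq t m)).2.1 := by
      have := congrArg (fun z => z.2.1) hnm
      simpa using this
    have htxn : (16 : ℚ) * t * xn ≠ 0 := by positivity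
    have htxm : (16 : ℚ) * t * xm ≠ 0 := by positivity
    have h3 : (64 * t ^ 2 - xn ^ 2) * (16 * t * xm) = (64 * t ^ 2 - xm ^ 2) * (16 * t * xn) := by
      have := h2
      unfold tripleOf at this
      simp only at this
      rw [div_eq_div_iff htxn htxm] at this
      exact this
    have hkey : (xm - xn) * (64 * t ^ 2 + xn * xm) = 0 := by
      have h16 : (16 : ℚ) * t * ((xm - xn) * (64 * t ^ 2 + xn * xm)) = 0 := by
        linear_combination h3
      rcases mul_eq_zero.1 h16 with h | h
      · exact absurd h (by positivity)
      · exact h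
    -- 64t² + xn xm ≠ 0
    have hxnxm : xn * xm ≠ 0 := mul_ne_zero hxn hxm
    have hVprod : V (xn * xm) = 8 * V t - 16 - 2 * n - 2 * m := by
      rw [padicValRat.mul hxn hxm, hVn, hVm]; ring
    have h64 : (64 : ℚ) * t ^ 2 ≠ 0 := by positivity
    have hV64 : V (64 * t ^ 2) = 6 + 2 * V t := by
      rw [padicValRat.mul (by norm_num) (pow_ne_zero _ ht), V64, padicValRat.pow _]; ring
    have hsum := vadd hxnxm h64 (by
      rw [hVprod, hV64]
      have hn0 : (0:ℤ) ≤ (n:ℤ) := Int.ofNat_nonneg n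
      have hm0 : (0:ℤ) ≤ (m:ℤ) := Int.ofNat_nonneg m
      linarith)
    have hne2 : xn * xm + 64 * t ^ 2 ≠ 0 := hsum.1
    have hxeq : xm = xn := by
      rcases mul_eq_zero.1 hkey with h | h
      · linarith [h]
      · exact absurd (by linarith [h] : xn * xm + 64 * t ^ 2 = 0) hne2
    have : V xn = V xm := by rw [hxeq]
    rw [hVn, hVm] at this
    have : (n : ℤ) = m := by linarith
    exact hne (by exact_mod_cast this)
  · intro n
    obtain ⟨hx, hy, hVx⟩ := good t ht hv n
    have hd : V (ptseq t n).1 ≤ 4 * V t - 8 := by rw [hVx]; omega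
    have := triple_mem ht hv hx hd hy
    simpa using this

end Stmt4Aux

open Stmt4Aux in
theorem stmt_4 (t : ℚ) :
    {x : ℚ × ℚ × ℚ | x.1 ∈ Sslope ∧ x.2.1 ∈ Sslope ∧ x.2.2 ∈ Sslope ∧
      x.1 * x.2.1 * x.2.2 = t}.Infinite := by
  by_cases ht : t = 0
  · subst ht
    apply Set.infinite_of_injective_forall_mem
      (f := fun n : ℕ => ((((n : ℚ) + 2) ^ 2 - 1) / (2 * ((n : ℚ) + 2)), (0 : ℚ), (0 : ℚ)))
    · intro n m hnm
      have h1 : (((n : ℚ) + 2) ^ 2 - 1) / (2 * ((n : ℚ) + 2))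
          = (((m : ℚ) + 2) ^ 2 - 1) / (2 * ((m : ℚ) + 2)) := congrArg (·.1) hnm
      have hn0 : (2 : ℚ) * ((n : ℚ) + 2) ≠ 0 := by positivity
      have hm0 : (2 : ℚ) * ((m : ℚ) + 2) ≠ 0 := by positivity
      rw [div_eq_div_iff hn0 hm0] at h1
      have hkey : (((n : ℚ)) - (m : ℚ)) * (((n : ℚ) + 2) * ((m : ℚ) + 2) + 1) = 0 := by
        linear_combination h1 / 2
      have hpos : ((n : ℚ) + 2) * ((m : ℚ) + 2) + 1 ≠ 0 := by positivity
      have : ((n : ℚ)) = m := by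
        rcases mul_eq_zero.1 hkey with h | h
        · linarith
        · exact absurd h hpos
      exact_mod_cast this
    · intro n
      have hn0 : (2 : ℚ) * ((n : ℚ) + 2) ≠ 0 := by positivity
      refine ⟨⟨(((n : ℚ) + 2) ^ 2 + 1) / (2 * ((n : ℚ) + 2)), ?_⟩, ⟨1, by norm_num⟩,
        ⟨1, by norm_num⟩, by ring⟩
      rw [div_pow, div_pow, div_add' _ _ _ (pow_ne_zero 2 hn0), div_eq_div_iff
        (pow_ne_zero 2 hn0) (pow_ne_zero 2 hn0)]
      ring
  · by_cases hv : padicValRat 2 t ≤ 1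
    · obtain ⟨g, hginj, hg⟩ := main_aux t ht hv
      exact Set.infinite_of_injective_forall_mem hginj (fun n => hg n)
    · -- use the reciprocal
      have hti : t⁻¹ ≠ 0 := inv_ne_zero ht
      have hvi : padicValRat 2 t⁻¹ ≤ 1 := by
        rw [padicValRat.inv]
        linarith [not_le.1 hv]
      obtain ⟨g, hginj, hg⟩ := main_aux t⁻¹ hti hvi
      apply Set.infinite_of_injective_forall_mem
        (f := fun n => ((g n).1⁻¹, (g n).2.1⁻¹, (g n).2.2⁻¹))
      · intro n m hnm
        apply hginj
        have h1 := congrArg (·.1) hnm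
        have h2 := congrArg (·.2.1) hnm
        have h3 := congrArg (·.2.2) hnm
        simp only at h1 h2 h3
        exact Prod.ext (inv_injective h1) (Prod.ext (inv_injective h2) (inv_injective h3))
      · intro n
        obtain ⟨ha, hb, hc, habc⟩ := hg n
        have ha0 : (g n).1 ≠ 0 := by
          intro h; rw [h] at habc; simp at habc; exact ht habc.symm
        have hb0 : (g n).2.1 ≠ 0 := by
          intro h; rw [h] at habc; simp at habc; exact ht habc.symm
        have hc0 : (g n).2.2 ≠ 0 := by
          intro h; rw [h] at habc; simp at habc; exact ht habc.symm
        refine ⟨inv_mem ha ha0, inv_mem hb hb0, inv_mem hc hc0, ?_⟩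
        rw [← mul_inv, ← mul_inv, habc, inv_inv]
end

section
/- Let a,b,c,d ∈ ℚ with ad − bc ≠ 0, and suppose a² + b² = c² + d² and ac + bd = 0 (i.e., the matrix η = (a b; c d) satisfies ηηᵗ = (a²+b²)·I). If there exists (x₀,y₀,z₀) ∈ ℚ³ with (x₀,y₀,z₀) ≠ (0,0,0) and y₀² = (a(z₀² − x₀²) + 2bx₀z₀)² + (c(z₀² − x₀²) + 2dx₀z₀)², then there exists λ ∈ ℚ with λ ≠ 0 and λ² = a² + b², and every (x,y,z) ∈ ℚ³ satisfying y² = (a(z² − x²) + 2bxz)² + (c(z² − x²) + 2dxz)² satisfies y = λ(x² + z²) or y = −λ(x² + z²). -/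
/-! If the rows of `η` are orthogonal of equal squared norm `k = a² + b²`, nonzero since
`det η ≠ 0`, then so are its columns, i.e. `ηᵗη = k·I`. Hence the right-hand side of `H_η` is
`k·‖(z² − x², 2xz)‖² = k (x² + z²)²`. A rational point with `(x₀, z₀) ≠ 0` makes `k` a square
`λ²`, and then `y² = λ² (x² + z²)²` on the whole curve. -/

section OrthogonalRows

variable {K : Type*} [Field K] {a b c d : K}

theorem sq_add_sq_of_rows_orthogonal (hk : a ^ 2 + b ^ 2 ≠ 0)
    (hnorm : a ^ 2 + b ^ 2 = c ^ 2 + d ^ 2) (horth : a * c + b * d = 0) (u v : K) :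
    (a * u + b * v) ^ 2 + (c * u + d * v) ^ 2 = (a ^ 2 + b ^ 2) * (u ^ 2 + v ^ 2) := by
  have hc : c ^ 2 = b ^ 2 := mul_left_cancel₀ hk <| by
    linear_combination (a * c - b * d) * horth - b ^ 2 * hnorm
  have hcols : a * b + c * d = 0 := mul_left_cancel₀ hk <| by
    linear_combination (b * c + a * d) * horth + a * b * hnorm
  linear_combination (u ^ 2 - v ^ 2) * hc + 2 * u * v * hcols - v ^ 2 * hnorm

theorem curve_rhs_eq_of_rows_orthogonal (hk : a ^ 2 + b ^ 2 ≠ 0)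
    (hnorm : a ^ 2 + b ^ 2 = c ^ 2 + d ^ 2) (horth : a * c + b * d = 0) (x z : K) :
    (a * (z ^ 2 - x ^ 2) + 2 * b * x * z) ^ 2 + (c * (z ^ 2 - x ^ 2) + 2 * d * x * z) ^ 2 =
      (a ^ 2 + b ^ 2) * (x ^ 2 + z ^ 2) ^ 2 := by
  linear_combination sq_add_sq_of_rows_orthogonal hk hnorm horth (z ^ 2 - x ^ 2) (2 * x * z)

end OrthogonalRows

theorem stmt_5 (a b c d : ℚ) (hdet : a * d - b * c ≠ 0)
    (hnorm : a ^ 2 + b ^ 2 = c ^ 2 + d ^ 2) (horth : a * c + b * d = 0)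
    (x₀ y₀ z₀ : ℚ) (hne : (x₀, y₀, z₀) ≠ (0, 0, 0))
    (heq : y₀ ^ 2 = (a * (z₀ ^ 2 - x₀ ^ 2) + 2 * b * x₀ * z₀) ^ 2 +
      (c * (z₀ ^ 2 - x₀ ^ 2) + 2 * d * x₀ * z₀) ^ 2) :
    ∃ l : ℚ, l ≠ 0 ∧ l ^ 2 = a ^ 2 + b ^ 2 ∧
      ∀ x y z : ℚ, y ^ 2 = (a * (z ^ 2 - x ^ 2) + 2 * b * x * z) ^ 2 +
          (c * (z ^ 2 - x ^ 2) + 2 * d * x * z) ^ 2 →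
        y = l * (x ^ 2 + z ^ 2) ∨ y = -(l * (x ^ 2 + z ^ 2)) := by
  have hk : a ^ 2 + b ^ 2 ≠ 0 := fun h => hdet <| by
    obtain ⟨rfl, rfl⟩ := (mul_self_add_mul_self_eq_zero (a := a) (b := b)).mp
      (by linear_combination h)
    ring
  have hcurve := curve_rhs_eq_of_rows_orthogonal hk hnorm horth
  rw [hcurve] at heq
  have hs : x₀ ^ 2 + z₀ ^ 2 ≠ 0 := fun h => hne <| by
    obtain ⟨rfl, rfl⟩ := (mul_self_add_mul_self_eq_zero (a := x₀) (b := z₀)).mp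
      (by linear_combination h)
    simp_all
  have hl : (y₀ / (x₀ ^ 2 + z₀ ^ 2)) ^ 2 = a ^ 2 + b ^ 2 := by
    rw [div_pow, heq, mul_div_cancel_right₀ _ (pow_ne_zero 2 hs)]
  refine ⟨y₀ / (x₀ ^ 2 + z₀ ^ 2), fun h => hk ?_, hl, fun x y z h => ?_⟩
  · rw [← hl, h, zero_pow two_ne_zero]
  · rw [hcurve, ← hl, ← mul_pow] at h
    exact sq_eq_sq_iff_eq_or_eq_neg.mp h
end

section
/- Let a,b,c,d ∈ ℚ with ad − bc ≠ 0, let λ ∈ ℚ with λ ≠ 0, and let R₁, R₂ be 2×2 matrices over ℚ with R₁R₁ᵗ = I and R₂R₂ᵗ = I. Write (a′ b′; c′ d′) = λ · R₁ · (a b; c d) · R₂⁻¹. Then there exists (x,y,z) ∈ ℚ³ with (x,y,z) ≠ (0,0,0) satisfying y² = (a(z² − x²) + 2bxz)² + (c(z² − x²) + 2dxz)² if and only if there exists (x′,y′,z′) ∈ ℚ³ with (x′,y′,z′) ≠ (0,0,0) satisfying y′² = (a′(z′² − x′²) + 2b′x′z′)² + (c′(z′² − x′²) + 2d′x′z′)².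 -/
open Matrix

private lemma key (p q r s x z : ℚ) (h1 : p^2 + q^2 = 1) (h2 : r^2 + s^2 = 1)
    (h3 : p*r + q*s = 0) :
    ∃ X Z t : ℚ, t ≠ 0 ∧ p*(z^2 - x^2) + q*(2*x*z) = t*(Z^2 - X^2) ∧
      r*(z^2 - x^2) + s*(2*x*z) = t*(2*X*Z) := by
  have hD : (q*r - p*s - 1) * (q*r - p*s + 1) = 0 := by nlinarith [h1, h2, h3]
  rcases mul_eq_zero.mp hD with hD1 | hD1
  · -- reflection case, r = q, s = -p
    have hr : r = q := by linear_combination p*h3 + q*hD1 - r*h1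
    have hs : s = -p := by linear_combination q*h3 - p*hD1 - s*h1
    by_cases hp : p = -1
    · have hq : q = 0 := by
        have h0 : q^2 = 0 := by linear_combination h1 - (p-1)*hp
        exact (pow_eq_zero_iff two_ne_zero).mp h0
      exact ⟨z, x, 1, one_ne_zero, by rw [hp, hq]; ring, by rw [hr, hs, hp, hq]; ring⟩
    · have hp' : (1:ℚ) + p ≠ 0 := fun hc => hp (by linarith)
      refine ⟨-(1+p)*x + q*z, (1+p)*z + q*x, 1/(2*(1+p)),
        one_div_ne_zero (mul_ne_zero two_ne_zero hp'), ?_, ?_⟩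
      · field_simp
        linear_combination (z^2 - x^2)*h1
      · rw [hr, hs]
        field_simp
        linear_combination (-x*z)*h1
  · -- rotation case, r = -q, s = p
    have hr : r = -q := by linear_combination p*h3 + q*hD1 - r*h1
    have hs : s = p := by linear_combination q*h3 - p*hD1 - s*h1
    by_cases hp : p = -1
    · have hq : q = 0 := by
        have h0 : q^2 = 0 := by linear_combination h1 - (p-1)*hp
        exact (pow_eq_zero_iff two_ne_zero).mp h0
      exact ⟨z, -x, 1, one_ne_zero, by rw [hp, hq]; ring, by rw [hr, hs, hp, hq]; ring⟩
    · have hp' : (1:ℚ) + p ≠ 0 := fun hc => hp (by linarith)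
      refine ⟨(1+p)*x - q*z, (1+p)*z + q*x, 1/(2*(1+p)),
        one_div_ne_zero (mul_ne_zero two_ne_zero hp'), ?_, ?_⟩
      · field_simp
        linear_combination (z^2 - x^2)*h1
      · rw [hr, hs]
        field_simp
        linear_combination (x*z)*h1

set_option maxHeartbeats 1000000 in
private lemma fwd (a b c d : ℚ) (l : ℚ) (hl : l ≠ 0)
    (R₁ R₂ : Matrix (Fin 2) (Fin 2) ℚ) (hR₁ : R₁ * R₁ᵀ = 1) (hR₂ : R₂ * R₂ᵀ = 1)
    (a' b' c' d' : ℚ) (h : !![a', b'; c', d'] = l • (R₁ * !![a, b; c, d] * R₂⁻¹))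
    (x y z : ℚ) (hxyz : (x, y, z) ≠ (0, 0, 0))
    (heq : y ^ 2 = (a * (z ^ 2 - x ^ 2) + 2 * b * x * z) ^ 2 +
      (c * (z ^ 2 - x ^ 2) + 2 * d * x * z) ^ 2) :
    ∃ x' y' z' : ℚ, (x', y', z') ≠ (0, 0, 0) ∧
      y' ^ 2 = (a' * (z' ^ 2 - x' ^ 2) + 2 * b' * x' * z') ^ 2 +
        (c' * (z' ^ 2 - x' ^ 2) + 2 * d' * x' * z') ^ 2 := by
  -- notation
  set e := R₁ 0 0 with he_def
  set f := R₁ 0 1 with hf_def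
  set g := R₁ 1 0 with hg_def
  set k := R₁ 1 1 with hk_def
  set p := R₂ 0 0 with hp_def
  set q := R₂ 0 1 with hq_def
  set r := R₂ 1 0 with hr_def
  set s := R₂ 1 1 with hs_def
  have hR₁' : R₁ᵀ * R₁ = 1 := mul_eq_one_comm.mp hR₁
  have hR₂' : R₂ᵀ * R₂ = 1 := mul_eq_one_comm.mp hR₂
  have hinv : R₂⁻¹ = R₂ᵀ := inv_eq_right_inv hR₂
  rw [hinv] at h
  -- scalar orthogonality relations
  have he1 : e*e + g*g = 1 := by
    simpa [Matrix.mul_apply, Fin.sum_univ_two] using congrFun (congrFun hR₁' 0) 0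
  have he2 : f*f + k*k = 1 := by
    simpa [Matrix.mul_apply, Fin.sum_univ_two] using congrFun (congrFun hR₁' 1) 1
  have he3 : e*f + g*k = 1 * 0 := by
    simpa [Matrix.mul_apply, Fin.sum_univ_two] using congrFun (congrFun hR₁' 0) 1
  have hrow1 : p^2 + q^2 = 1 := by
    have := congrFun (congrFun hR₂ 0) 0
    simp [Matrix.mul_apply, Fin.sum_univ_two] at this
    linear_combination this
  have hrow2 : r^2 + s^2 = 1 := by
    have := congrFun (congrFun hR₂ 1) 1
    simp [Matrix.mul_apply, Fin.sum_univ_two] at this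
    linear_combination this
  have hrow3 : p*r + q*s = 0 := by
    have := congrFun (congrFun hR₂ 0) 1
    simp [Matrix.mul_apply, Fin.sum_univ_two] at this
    linear_combination this
  have hc1 : p*p + r*r = 1 := by
    simpa [Matrix.mul_apply, Fin.sum_univ_two] using congrFun (congrFun hR₂' 0) 0
  have hc2 : q*q + s*s = 1 := by
    simpa [Matrix.mul_apply, Fin.sum_univ_two] using congrFun (congrFun hR₂' 1) 1
  have hc3 : q*p + s*r = 1 * 0 := by
    simpa [Matrix.mul_apply, Fin.sum_univ_two] using congrFun (congrFun hR₂' 1) 0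
  -- entries of the transformed matrix
  have ha' : a' = l * ((e * a + f * c) * p + (e * b + f * d) * q) := by
    have := congrFun (congrFun h 0) 0
    simp [Matrix.mul_apply, Fin.sum_univ_two] at this
    linear_combination this
  have hb' : b' = l * ((e * a + f * c) * r + (e * b + f * d) * s) := by
    have := congrFun (congrFun h 0) 1
    simp [Matrix.mul_apply, Fin.sum_univ_two] at this
    linear_combination this
  have hc' : c' = l * ((g * a + k * c) * p + (g * b + k * d) * q) := by
    have := congrFun (congrFun h 1) 0
    simp [Matrix.mul_apply, Fin.sum_univ_two] at this
    linear_combination this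
  have hd' : d' = l * ((g * a + k * c) * r + (g * b + k * d) * s) := by
    have := congrFun (congrFun h 1) 1
    simp [Matrix.mul_apply, Fin.sum_univ_two] at this
    linear_combination this
  -- the original point has x^2 + z^2 ≠ 0
  have hxz : x^2 + z^2 ≠ 0 := by
    intro h0
    have hx : x = 0 := by nlinarith [sq_nonneg x, sq_nonneg z]
    have hz : z = 0 := by nlinarith [sq_nonneg x, sq_nonneg z]
    have hy : y = 0 := by
      have : y^2 = 0 := by rw [heq, hx, hz]; ring
      exact pow_eq_zero_iff two_ne_zero |>.mp this
    exact hxyz (by rw [hx, hy, hz])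
  obtain ⟨X, Z, t, ht, hU, hV⟩ := key p q r s x z hrow1 hrow2 hrow3
  have hnzsq : t^2 * ((Z^2 - X^2)^2 + (2*X*Z)^2) = (x^2 + z^2)^2 := by
    linear_combination (-(t*(Z^2-X^2) + p*(z^2-x^2) + q*(2*x*z)))*hU
      - (t*(2*X*Z) + r*(z^2-x^2) + s*(2*x*z))*hV
      + (z^2-x^2)^2*hc1 + (2*x*z)^2*hc2 + 2*(z^2-x^2)*(2*x*z)*hc3
  refine ⟨X, l * y / t, Z, ?_, ?_⟩
  · intro hcon
    rw [Prod.mk.injEq, Prod.mk.injEq] at hcon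
    obtain ⟨hX, -, hZ⟩ := hcon
    rw [hX, hZ] at hnzsq
    simp at hnzsq
    exact hxz (pow_eq_zero_iff two_ne_zero |>.mp hnzsq.symm)
  · have hA : t*(a' * (Z^2 - X^2) + 2*b'*X*Z)
        = l*((e*a+f*c)*(z^2-x^2) + (e*b+f*d)*(2*x*z)) := by
      linear_combination (p*(z^2-x^2)+q*(2*x*z))*ha' + (r*(z^2-x^2)+s*(2*x*z))*hb'
        - a'*hU - b'*hV + l*(e*a+f*c)*(z^2-x^2)*hc1 + l*(e*b+f*d)*(2*x*z)*hc2
        + (l*(e*a+f*c)*(2*x*z) + l*(e*b+f*d)*(z^2-x^2))*hc3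
    have hB : t*(c' * (Z^2 - X^2) + 2*d'*X*Z)
        = l*((g*a+k*c)*(z^2-x^2) + (g*b+k*d)*(2*x*z)) := by
      linear_combination (p*(z^2-x^2)+q*(2*x*z))*hc' + (r*(z^2-x^2)+s*(2*x*z))*hd'
        - c'*hU - d'*hV + l*(g*a+k*c)*(z^2-x^2)*hc1 + l*(g*b+k*d)*(2*x*z)*hc2
        + (l*(g*a+k*c)*(2*x*z) + l*(g*b+k*d)*(z^2-x^2))*hc3
    have hfin : (l*y)^2 = (t*(a' * (Z^2 - X^2) + 2*b'*X*Z))^2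
        + (t*(c' * (Z^2 - X^2) + 2*d'*X*Z))^2 := by
      linear_combination l^2*heq
        - (t*(a' * (Z^2 - X^2) + 2*b'*X*Z) + l*((e*a+f*c)*(z^2-x^2) + (e*b+f*d)*(2*x*z)))*hA
        - (t*(c' * (Z^2 - X^2) + 2*d'*X*Z) + l*((g*a+k*c)*(z^2-x^2) + (g*b+k*d)*(2*x*z)))*hB
        - l^2*(a*(z^2-x^2)+b*(2*x*z))^2*he1 - l^2*(c*(z^2-x^2)+d*(2*x*z))^2*he2
        - 2*l^2*(a*(z^2-x^2)+b*(2*x*z))*(c*(z^2-x^2)+d*(2*x*z))*he3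
    rw [div_pow]
    rw [div_eq_iff (pow_ne_zero 2 ht)]
    linear_combination hfin

theorem stmt_6 (a b c d : ℚ) (hdet : a * d - b * c ≠ 0) (l : ℚ) (hl : l ≠ 0)
    (R₁ R₂ : Matrix (Fin 2) (Fin 2) ℚ) (hR₁ : R₁ * R₁ᵀ = 1) (hR₂ : R₂ * R₂ᵀ = 1)
    (a' b' c' d' : ℚ) (h : !![a', b'; c', d'] = l • (R₁ * !![a, b; c, d] * R₂⁻¹)) :
    ((∃ x y z : ℚ, (x, y, z) ≠ (0, 0, 0) ∧
        y ^ 2 = (a * (z ^ 2 - x ^ 2) + 2 * b * x * z) ^ 2 +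
          (c * (z ^ 2 - x ^ 2) + 2 * d * x * z) ^ 2) ↔
      (∃ x' y' z' : ℚ, (x', y', z') ≠ (0, 0, 0) ∧
        y' ^ 2 = (a' * (z' ^ 2 - x' ^ 2) + 2 * b' * x' * z') ^ 2 +
          (c' * (z' ^ 2 - x' ^ 2) + 2 * d' * x' * z') ^ 2)) := by
  have hR₁' : R₁ᵀ * R₁ = 1 := mul_eq_one_comm.mp hR₁
  have hR₂' : R₂ᵀ * R₂ = 1 := mul_eq_one_comm.mp hR₂
  have hinv : R₂⁻¹ = R₂ᵀ := inv_eq_right_inv hR₂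
  have hTinv : (R₂ᵀ)⁻¹ = R₂ := inv_eq_right_inv hR₂'
  have hR₁T : R₁ᵀ * R₁ᵀᵀ = 1 := by rw [transpose_transpose]; exact hR₁'
  have hR₂T : R₂ᵀ * R₂ᵀᵀ = 1 := by rw [transpose_transpose]; exact hR₂'
  have h2 : !![a, b; c, d] = l⁻¹ • (R₁ᵀ * !![a', b'; c', d'] * (R₂ᵀ)⁻¹) := by
    rw [hTinv, h, hinv, Matrix.mul_smul, Matrix.smul_mul]
    simp only [← Matrix.mul_assoc]
    rw [hR₁', Matrix.one_mul, Matrix.mul_assoc, hR₂', Matrix.mul_one, smul_smul,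
      inv_mul_cancel₀ hl, one_smul]
  constructor
  · rintro ⟨x, y, z, hne, heq⟩
    exact fwd a b c d l hl R₁ R₂ hR₁ hR₂ a' b' c' d' h x y z hne heq
  · rintro ⟨x, y, z, hne, heq⟩
    exact fwd a' b' c' d' l⁻¹ (inv_ne_zero hl) R₁ᵀ R₂ᵀ hR₁T hR₂T a b c d h2 x y z hne heq
end

section
/- Let a,b,c,d ∈ ℚ with ad − bc ≠ 0, and let (x₀,y₀,z₀) ∈ ℚ³ with (x₀,y₀,z₀) ≠ (0,0,0) satisfy y₀² = (a(z₀² − x₀²) + 2bx₀z₀)² + (c(z₀² − x₀²) + 2dx₀z₀)². Define r = [(ab + cd)·((z₀² − x₀²)² − (2x₀z₀)²) − (a² − b² + c² − d²)·(z₀² − x₀²)·(2x₀z₀)] / y₀² and s = (ad − bc)·(z₀² + x₀²)² / y₀². Then there exist λ ∈ ℚ with λ ≠ 0 and 2×2 rational matrices R₁, R₂ with R₁R₁ᵗ = I and R₂R₂ᵗ = I such that (a b; c d) = λ · R₁ · (1 r; 0 s) · R₂. -/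
open Matrix

set_option maxHeartbeats 1000000 in
theorem stmt_7 (a b c d : ℚ) (hdet : a * d - b * c ≠ 0)
    (x₀ y₀ z₀ : ℚ) (hne : (x₀, y₀, z₀) ≠ (0, 0, 0))
    (heq : y₀ ^ 2 = (a * (z₀ ^ 2 - x₀ ^ 2) + 2 * b * x₀ * z₀) ^ 2 +
      (c * (z₀ ^ 2 - x₀ ^ 2) + 2 * d * x₀ * z₀) ^ 2)
    (r s : ℚ)
    (hr : r = ((a * b + c * d) * ((z₀ ^ 2 - x₀ ^ 2) ^ 2 - (2 * x₀ * z₀) ^ 2) -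
      (a ^ 2 - b ^ 2 + c ^ 2 - d ^ 2) * (z₀ ^ 2 - x₀ ^ 2) * (2 * x₀ * z₀)) / y₀ ^ 2)
    (hs : s = (a * d - b * c) * (z₀ ^ 2 + x₀ ^ 2) ^ 2 / y₀ ^ 2) :
    ∃ (l : ℚ) (R₁ R₂ : Matrix (Fin 2) (Fin 2) ℚ), l ≠ 0 ∧
      R₁ * R₁ᵀ = 1 ∧ R₂ * R₂ᵀ = 1 ∧
      !![a, b; c, d] = l • (R₁ * !![1, r; 0, s] * R₂) := by
  obtain ⟨u, hu⟩ : ∃ u : ℚ, u = z₀ ^ 2 - x₀ ^ 2 := ⟨_, rfl⟩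
  obtain ⟨v, hv⟩ : ∃ v : ℚ, v = 2 * x₀ * z₀ := ⟨_, rfl⟩
  obtain ⟨w, hw⟩ : ∃ w : ℚ, w = z₀ ^ 2 + x₀ ^ 2 := ⟨_, rfl⟩
  have heq' : y₀ ^ 2 = (a * u + b * v) ^ 2 + (c * u + d * v) ^ 2 := by
    rw [heq, hu, hv]; ring
  have hw2 : u ^ 2 + v ^ 2 = w ^ 2 := by rw [hu, hv, hw]; ring
  have hr' : r = ((a * b + c * d) * (u ^ 2 - v ^ 2) -
      (a ^ 2 - b ^ 2 + c ^ 2 - d ^ 2) * u * v) / y₀ ^ 2 := by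
    rw [hr, hu, hv]
  have hs' : s = (a * d - b * c) * w ^ 2 / y₀ ^ 2 := by rw [hs, hw]
  have hy : y₀ ≠ 0 := by
    intro h
    rw [h] at heq'
    have h0 : (a * u + b * v) ^ 2 + (c * u + d * v) ^ 2 = 0 := by linear_combination -heq'
    obtain ⟨hP2, hQ2⟩ := (add_eq_zero_iff_of_nonneg (sq_nonneg _) (sq_nonneg _)).mp h0
    have hP0 : a * u + b * v = 0 := pow_eq_zero_iff two_ne_zero |>.mp hP2
    have hQ0 : c * u + d * v = 0 := pow_eq_zero_iff two_ne_zero |>.mp hQ2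
    have hu0 : u = 0 := by
      have h1 : (a * d - b * c) * u = 0 := by linear_combination d * hP0 - b * hQ0
      exact (mul_eq_zero.mp h1).resolve_left hdet
    have hv0 : v = 0 := by
      have h1 : (a * d - b * c) * v = 0 := by linear_combination a * hQ0 - c * hP0
      exact (mul_eq_zero.mp h1).resolve_left hdet
    rw [hu] at hu0; rw [hv] at hv0
    have hx4 : x₀ ^ 2 * x₀ ^ 2 = 0 := by
      linear_combination (-(x₀ ^ 2)) * hu0 + (x₀ * z₀ / 2) * hv0
    have hx : x₀ = 0 :=
      pow_eq_zero_iff two_ne_zero |>.mp (mul_self_eq_zero.mp hx4)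
    have hz : z₀ = 0 := by
      have h2 : z₀ ^ 2 = 0 := by rw [hx] at hu0; linarith
      exact pow_eq_zero_iff two_ne_zero |>.mp h2
    exact hne (by simp [hx, hz, h])
  have hy2 : y₀ ^ 2 ≠ 0 := pow_ne_zero 2 hy
  have hwne : w ≠ 0 := by
    intro h
    rw [hw] at h
    obtain ⟨hz2, hx2⟩ := (add_eq_zero_iff_of_nonneg (sq_nonneg z₀) (sq_nonneg x₀)).mp h
    have hx : x₀ = 0 := pow_eq_zero_iff two_ne_zero |>.mp hx2
    have hz : z₀ = 0 := pow_eq_zero_iff two_ne_zero |>.mp hz2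
    apply hy
    have h2 : y₀ ^ 2 = 0 := by rw [heq, hx, hz]; ring
    exact pow_eq_zero_iff two_ne_zero |>.mp h2
  have htr : ∀ p q p' q' : ℚ, (!![p, q; p', q'])ᵀ = !![p, p'; q, q'] := by
    intros; ext i j; fin_cases i <;> fin_cases j <;> rfl
  refine ⟨y₀ / w,
    !![(a * u + b * v) / y₀, -((c * u + d * v) / y₀);
       (c * u + d * v) / y₀, (a * u + b * v) / y₀],
    !![u / w, v / w; -(v / w), u / w], div_ne_zero hy hwne, ?_, ?_, ?_⟩
  · rw [htr]
    ext i j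
    fin_cases i <;> fin_cases j <;>
      · simp [Matrix.mul_apply, Fin.sum_univ_two]
        field_simp
        first | linear_combination -heq' | linear_combination heq' | ring
  · rw [htr]
    ext i j
    fin_cases i <;> fin_cases j <;>
      · simp [Matrix.mul_apply, Fin.sum_univ_two]
        field_simp
        first | linear_combination -hw2 | linear_combination hw2 | ring
  · rw [hr', hs']
    have hNr : ∀ X : ℚ, X = X := fun _ => rfl
    have hprod :
        (y₀ / w) • (!![(a * u + b * v) / y₀, -((c * u + d * v) / y₀);
            (c * u + d * v) / y₀, (a * u + b * v) / y₀] *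
          !![1, ((a * b + c * d) * (u ^ 2 - v ^ 2) -
              (a ^ 2 - b ^ 2 + c ^ 2 - d ^ 2) * u * v) / y₀ ^ 2;
             0, (a * d - b * c) * w ^ 2 / y₀ ^ 2] *
          !![u / w, v / w; -(v / w), u / w]) =
        !![((a * u + b * v) * u * y₀ ^ 2 -
              v * ((a * u + b * v) * ((a * b + c * d) * (u ^ 2 - v ^ 2) -
                (a ^ 2 - b ^ 2 + c ^ 2 - d ^ 2) * u * v) -
                (c * u + d * v) * ((a * d - b * c) * w ^ 2))) / (w ^ 2 * y₀ ^ 2),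
            ((a * u + b * v) * v * y₀ ^ 2 +
              u * ((a * u + b * v) * ((a * b + c * d) * (u ^ 2 - v ^ 2) -
                (a ^ 2 - b ^ 2 + c ^ 2 - d ^ 2) * u * v) -
                (c * u + d * v) * ((a * d - b * c) * w ^ 2))) / (w ^ 2 * y₀ ^ 2);
            ((c * u + d * v) * u * y₀ ^ 2 -
              v * ((c * u + d * v) * ((a * b + c * d) * (u ^ 2 - v ^ 2) -
                (a ^ 2 - b ^ 2 + c ^ 2 - d ^ 2) * u * v) +
                (a * u + b * v) * ((a * d - b * c) * w ^ 2))) / (w ^ 2 * y₀ ^ 2),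
            ((c * u + d * v) * v * y₀ ^ 2 +
              u * ((c * u + d * v) * ((a * b + c * d) * (u ^ 2 - v ^ 2) -
                (a ^ 2 - b ^ 2 + c ^ 2 - d ^ 2) * u * v) +
                (a * u + b * v) * ((a * d - b * c) * w ^ 2))) / (w ^ 2 * y₀ ^ 2)] := by
      ext i j
      fin_cases i <;> fin_cases j <;>
        · simp [Matrix.mul_apply, Fin.sum_univ_two, Matrix.transpose_apply]
          field_simp
          all_goals ring
    rw [hprod]
    have hwy : w ^ 2 * y₀ ^ 2 ≠ 0 := mul_ne_zero (pow_ne_zero 2 hwne) hy2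
    ext i j
    fin_cases i <;> fin_cases j
    · simp only [Fin.zero_eta, Fin.mk_one, Matrix.of_apply, Matrix.cons_val', Matrix.cons_val_zero, Matrix.cons_val_one,
        Matrix.head_cons, Matrix.empty_val', Matrix.cons_val_fin_one, Matrix.head_fin_const]
      rw [eq_div_iff hwy]
      linear_combination (a * w ^ 2 - (a * u + b * v) * u) * heq' -
        (a * ((a * u + b * v) ^ 2 + (c * u + d * v) ^ 2) -
          v * (c * u + d * v) * (a * d - b * c)) * hw2
    · simp only [Fin.zero_eta, Fin.mk_one, Matrix.of_apply, Matrix.cons_val', Matrix.cons_val_zero, Matrix.cons_val_one,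
        Matrix.head_cons, Matrix.empty_val', Matrix.cons_val_fin_one, Matrix.head_fin_const]
      rw [eq_div_iff hwy]
      linear_combination (b * w ^ 2 - (a * u + b * v) * v) * heq' -
        (b * ((a * u + b * v) ^ 2 + (c * u + d * v) ^ 2) +
          u * (c * u + d * v) * (a * d - b * c)) * hw2
    · simp only [Fin.zero_eta, Fin.mk_one, Matrix.of_apply, Matrix.cons_val', Matrix.cons_val_zero, Matrix.cons_val_one,
        Matrix.head_cons, Matrix.empty_val', Matrix.cons_val_fin_one, Matrix.head_fin_const]
      rw [eq_div_iff hwy]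
      linear_combination (c * w ^ 2 - (c * u + d * v) * u) * heq' -
        (c * ((a * u + b * v) ^ 2 + (c * u + d * v) ^ 2) +
          v * (a * u + b * v) * (a * d - b * c)) * hw2
    · simp only [Fin.zero_eta, Fin.mk_one, Matrix.of_apply, Matrix.cons_val', Matrix.cons_val_zero, Matrix.cons_val_one,
        Matrix.head_cons, Matrix.empty_val', Matrix.cons_val_fin_one, Matrix.head_fin_const]
      rw [eq_div_iff hwy]
      linear_combination (d * w ^ 2 - (c * u + d * v) * v) * heq' -
        (d * ((a * u + b * v) ^ 2 + (c * u + d * v) ^ 2) -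
          u * (a * u + b * v) * (a * d - b * c)) * hw2
end

section
/- Let p be a prime and let a,b,c,d ∈ ℤ with ad − bc ≠ 0. Suppose p divides ad − bc, the image of a² + b² in ℤ/pℤ is not a square in ℤ/pℤ, and the image of a² + c² in ℤ/pℤ is not a square in ℤ/pℤ. Then there is no triple (x,y,z) ∈ ℚ_p³ with (x,y,z) ≠ (0,0,0) satisfying y² = (a(z² − x²) + 2bxz)² + (c(z² − x²) + 2dxz)². -/
lemma key_zmod {p : ℕ} [Fact p.Prime] (a b c d x y z : ZMod p)
    (hdet : a * d = b * c)
    (hb : ¬ IsSquare (a ^ 2 + b ^ 2))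
    (hc : ¬ IsSquare (a ^ 2 + c ^ 2))
    (heq : y ^ 2 = (a * (z ^ 2 - x ^ 2) + 2 * b * x * z) ^ 2 +
      (c * (z ^ 2 - x ^ 2) + 2 * d * x * z) ^ 2) :
    x = 0 ∧ z = 0 := by
  have ha : a ≠ 0 := by rintro rfl; exact hb ⟨b, by ring⟩
  have he : a ^ 2 + c ^ 2 ≠ 0 := fun h => hc (h ▸ ⟨0, by ring⟩)
  have hT2 : (a ^ 2 + c ^ 2) * y ^ 2 =
      ((a ^ 2 + c ^ 2) * (z ^ 2 - x ^ 2) + (a * b + c * d) * (2 * x * z)) ^ 2 := by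
    linear_combination (a ^ 2 + c ^ 2) * heq + (a * d - b * c) * (2 * x * z) ^ 2 * hdet
  have hy : y = 0 := by
    by_contra hy
    refine hc ⟨((a ^ 2 + c ^ 2) * (z ^ 2 - x ^ 2) + (a * b + c * d) * (2 * x * z)) / y, ?_⟩
    field_simp
    linear_combination hT2
  have hT : (a ^ 2 + c ^ 2) * (z ^ 2 - x ^ 2) + (a * b + c * d) * (2 * x * z) = 0 := by
    have h2 : ((a ^ 2 + c ^ 2) * (z ^ 2 - x ^ 2) + (a * b + c * d) * (2 * x * z)) ^ 2 = 0 := by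
      rw [← hT2, hy]; ring
    exact pow_eq_zero_iff (by norm_num) |>.mp h2
  have hx : x = 0 := by
    by_contra hx
    refine hb ⟨(a * ((a ^ 2 + c ^ 2) * z + (a * b + c * d) * x)) / ((a ^ 2 + c ^ 2) * x), ?_⟩
    have hex : (a ^ 2 + c ^ 2) * x ≠ 0 := mul_ne_zero he hx
    field_simp
    linear_combination -(a ^ 2 * (a ^ 2 + c ^ 2)) * hT -
      c * (a * (a * b + c * d) + b * (a ^ 2 + c ^ 2)) * x ^ 2 * hdet
  refine ⟨hx, ?_⟩
  have hz2 : (a ^ 2 + c ^ 2) * z ^ 2 = 0 := by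
    rw [hx] at hT; linear_combination hT
  have := (mul_eq_zero.mp hz2).resolve_left he
  exact pow_eq_zero_iff (by norm_num) |>.mp this

lemma key_padic {p : ℕ} [Fact p.Prime] (a b c d : ℤ)
    (hp : (p : ℤ) ∣ a * d - b * c)
    (hb : ¬ IsSquare ((a ^ 2 + b ^ 2 : ℤ) : ZMod p))
    (hc : ¬ IsSquare ((a ^ 2 + c ^ 2 : ℤ) : ZMod p))
    (X Z : ℤ_[p]) (Y : ℚ_[p])
    (heq : Y ^ 2 = ((a : ℚ_[p]) * ((Z : ℚ_[p]) ^ 2 - (X : ℚ_[p]) ^ 2) + 2 * (b : ℚ_[p]) * X * Z) ^ 2 +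
        ((c : ℚ_[p]) * ((Z : ℚ_[p]) ^ 2 - (X : ℚ_[p]) ^ 2) + 2 * (d : ℚ_[p]) * X * Z) ^ 2) :
    PadicInt.toZMod X = 0 ∧ PadicInt.toZMod Z = 0 := by
  set A : ℤ_[p] := (a : ℤ_[p]) * (Z ^ 2 - X ^ 2) + ((2 * b : ℤ) : ℤ_[p]) * X * Z with hA
  set C : ℤ_[p] := (c : ℤ_[p]) * (Z ^ 2 - X ^ 2) + ((2 * d : ℤ) : ℤ_[p]) * X * Z with hC
  have hcoe : ((A ^ 2 + C ^ 2 : ℤ_[p]) : ℚ_[p]) =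
      ((a : ℚ_[p]) * ((Z : ℚ_[p]) ^ 2 - (X : ℚ_[p]) ^ 2) + 2 * (b : ℚ_[p]) * X * Z) ^ 2 +
        ((c : ℚ_[p]) * ((Z : ℚ_[p]) ^ 2 - (X : ℚ_[p]) ^ 2) + 2 * (d : ℚ_[p]) * X * Z) ^ 2 := by
    have h2 : ((2 : ℤ_[p]) : ℚ_[p]) = 2 := rfl
    rw [hA, hC]; push_cast [h2]; ring
  have hYnorm : ‖Y‖ ≤ 1 := by
    have h1 : ‖Y‖ ^ 2 = ‖Y ^ 2‖ := (norm_pow Y 2).symm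
    have h2 : ‖Y ^ 2‖ ≤ 1 := by
      rw [heq, ← hcoe]; exact (A ^ 2 + C ^ 2).2
    nlinarith [norm_nonneg Y]
  set Y' : ℤ_[p] := ⟨Y, hYnorm⟩ with hY'
  have heq' : Y' ^ 2 = A ^ 2 + C ^ 2 := by
    have h : ((Y' ^ 2 : ℤ_[p]) : ℚ_[p]) = ((A ^ 2 + C ^ 2 : ℤ_[p]) : ℚ_[p]) := by
      rw [hcoe, PadicInt.coe_pow]
      exact heq
    exact Subtype.coe_injective h
  have hmap := congrArg (PadicInt.toZMod (p := p)) heq'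
  rw [hA, hC] at hmap
  simp only [map_add, map_mul, map_sub, map_pow, map_intCast, map_ofNat] at hmap
  push_cast at hmap
  have hdet : (a : ZMod p) * (d : ZMod p) = (b : ZMod p) * (c : ZMod p) := by
    have h0 : ((a * d - b * c : ℤ) : ZMod p) = 0 :=
      (ZMod.intCast_zmod_eq_zero_iff_dvd _ p).mpr hp
    push_cast at h0
    linear_combination h0
  push_cast at hb hc
  exact key_zmod (a : ZMod p) b c d _ _ _ hdet hb hc hmap

theorem stmt_9 (p : ℕ) [Fact p.Prime] (a b c d : ℤ) (hdet : a * d - b * c ≠ 0)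
    (hp : (p : ℤ) ∣ a * d - b * c)
    (hb : ¬ IsSquare ((a ^ 2 + b ^ 2 : ℤ) : ZMod p))
    (hc : ¬ IsSquare ((a ^ 2 + c ^ 2 : ℤ) : ZMod p)) :
    ¬ ∃ x y z : ℚ_[p], (x, y, z) ≠ (0, 0, 0) ∧
      y ^ 2 = ((a : ℚ_[p]) * (z ^ 2 - x ^ 2) + 2 * (b : ℚ_[p]) * x * z) ^ 2 +
        ((c : ℚ_[p]) * (z ^ 2 - x ^ 2) + 2 * (d : ℚ_[p]) * x * z) ^ 2 := by
  rintro ⟨x, y, z, hne, heq⟩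
  have hxz : ¬ (x = 0 ∧ z = 0) := by
    rintro ⟨rfl, rfl⟩
    have hy : y = 0 := by
      have : y ^ 2 = 0 := by rw [heq]; ring
      exact pow_eq_zero_iff (by norm_num) |>.mp this
    exact hne (by rw [hy])
  have hone : (1 : ZMod p) ≠ 0 := one_ne_zero
  rcases le_total ‖x‖ ‖z‖ with h | h
  · have hz : z ≠ 0 := by
      rintro rfl
      simp only [norm_zero] at h
      exact hxz ⟨norm_le_zero_iff.mp h, rfl⟩
    have hXn : ‖x / z‖ ≤ 1 := by
      rw [norm_div]
      exact div_le_one_of_le₀ h (norm_nonneg _)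
    have h1 : (((1 : ℤ_[p]) : ℚ_[p])) = 1 := rfl
    have hX : (((⟨x / z, hXn⟩ : ℤ_[p]) : ℚ_[p])) = x / z := rfl
    have heq2 : (y / z ^ 2) ^ 2 =
        ((a : ℚ_[p]) * ((((1 : ℤ_[p]) : ℚ_[p])) ^ 2 - (((⟨x / z, hXn⟩ : ℤ_[p]) : ℚ_[p])) ^ 2) +
          2 * (b : ℚ_[p]) * (((⟨x / z, hXn⟩ : ℤ_[p]) : ℚ_[p])) * (((1 : ℤ_[p]) : ℚ_[p]))) ^ 2 +
        ((c : ℚ_[p]) * ((((1 : ℤ_[p]) : ℚ_[p])) ^ 2 - (((⟨x / z, hXn⟩ : ℤ_[p]) : ℚ_[p])) ^ 2) +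
          2 * (d : ℚ_[p]) * (((⟨x / z, hXn⟩ : ℤ_[p]) : ℚ_[p])) * (((1 : ℤ_[p]) : ℚ_[p]))) ^ 2 := by
      rw [h1, hX]
      field_simp
      linear_combination heq
    have hk := key_padic a b c d hp hb hc ⟨x / z, hXn⟩ 1 (y / z ^ 2) heq2
    rw [map_one] at hk
    exact hone hk.2
  · have hx : x ≠ 0 := by
      rintro rfl
      simp only [norm_zero] at h
      exact hxz ⟨rfl, norm_le_zero_iff.mp h⟩
    have hZn : ‖z / x‖ ≤ 1 := by
      rw [norm_div]
      exact div_le_one_of_le₀ h (norm_nonneg _)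
    have h1 : (((1 : ℤ_[p]) : ℚ_[p])) = 1 := rfl
    have hZ : (((⟨z / x, hZn⟩ : ℤ_[p]) : ℚ_[p])) = z / x := rfl
    have heq2 : (y / x ^ 2) ^ 2 =
        ((a : ℚ_[p]) * ((((⟨z / x, hZn⟩ : ℤ_[p]) : ℚ_[p])) ^ 2 - (((1 : ℤ_[p]) : ℚ_[p])) ^ 2) +
          2 * (b : ℚ_[p]) * (((1 : ℤ_[p]) : ℚ_[p])) * (((⟨z / x, hZn⟩ : ℤ_[p]) : ℚ_[p]))) ^ 2 +
        ((c : ℚ_[p]) * ((((⟨z / x, hZn⟩ : ℤ_[p]) : ℚ_[p])) ^ 2 - (((1 : ℤ_[p]) : ℚ_[p])) ^ 2) +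
          2 * (d : ℚ_[p]) * (((1 : ℤ_[p]) : ℚ_[p])) * (((⟨z / x, hZn⟩ : ℤ_[p]) : ℚ_[p]))) ^ 2 := by
      rw [h1, hZ]
      field_simp
      linear_combination heq
    have hk := key_padic a b c d hp hb hc 1 ⟨z / x, hZn⟩ (y / x ^ 2) heq2
    rw [map_one] at hk
    exact hone hk.1
end

section
/- Let p be a prime. The number of quadruples (a,b,c,d) ∈ (ℤ/pℤ)⁴ with (a,b,c,d) ≠ (0,0,0,0), ad = bc, and such that a² + b² is a square in ℤ/pℤ or a² + c² is a square in ℤ/pℤ, is at most (3/4 + 1/p) · (p+1)² · (p−1). -/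
open Finset

namespace Stmt10

open scoped Classical

variable {p : ℕ} [Fact p.Prime]

lemma two_ne (hp2 : p ≠ 2) : (2 : ZMod p) ≠ 0 := by
  intro h
  have h2 : ((2:ℕ) : ZMod p) = 0 := by exact_mod_cast h
  have hdvd := (ZMod.natCast_eq_zero_iff 2 p).mp h2
  have hpp : p.Prime := Fact.out
  exact hp2 ((Nat.prime_dvd_prime_iff_eq hpp Nat.prime_two).mp hdvd)

lemma card_sqrt (hp2 : p ≠ 2) (t : ZMod p) :
    (univ.filter fun s : ZMod p => s ^ 2 = t).card
      = if t = 0 then 1 else if IsSquare t then 2 else 0 := by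
  have h2 := two_ne (p := p) hp2
  split_ifs with h0 hsq
  · subst h0
    rw [Finset.card_eq_one]
    exact ⟨0, by ext s; simp [pow_eq_zero_iff]⟩
  · obtain ⟨r, hr⟩ := hsq
    have hr0 : r ≠ 0 := by rintro rfl; exact h0 (by simpa using hr)
    have hset : (univ.filter fun s : ZMod p => s ^ 2 = t) = {r, -r} := by
      ext s
      simp only [mem_filter, mem_univ, true_and, mem_insert, mem_singleton]
      constructor
      · intro h
        have hz : (s - r) * (s + r) = 0 := by
          have hh : s ^ 2 = r * r := h.trans hr
          linear_combination hh
        rcases mul_eq_zero.mp hz with h' | h'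
        · exact Or.inl (sub_eq_zero.mp h')
        · exact Or.inr (eq_neg_of_add_eq_zero_left h')
      · rintro (rfl | rfl) <;> (rw [hr]; ring)
    rw [hset, card_insert_of_notMem, card_singleton]
    simp only [mem_singleton]
    intro h
    have : (2 : ZMod p) * r = 0 := by linear_combination h
    rcases mul_eq_zero.mp this with h' | h'
    · exact h2 h'
    · exact hr0 h'
  · rw [Finset.filter_eq_empty_iff.mpr, card_empty]
    intro s _ h
    exact hsq ⟨s, by rw [← h]; ring⟩

lemma card_circle (hp2 : p ≠ 2) :
    (univ.filter fun q : ZMod p × ZMod p => q.2 ^ 2 = 1 + q.1 ^ 2).card = p - 1 := by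
  have h2 := two_ne (p := p) hp2
  haveI : NeZero p := ⟨(Fact.out : p.Prime).ne_zero⟩
  have key : (univ.filter fun q : ZMod p × ZMod p => q.2 ^ 2 = 1 + q.1 ^ 2).card
      = (univ.filter fun u : ZMod p => u ≠ 0).card := by
    refine Finset.card_bij' (fun q _ => q.1 + q.2)
      (fun u _ => ((u - u⁻¹) / 2, (u + u⁻¹) / 2)) ?hi ?hj ?li ?ri
    case hi =>
      intro q hq
      simp only [mem_filter, mem_univ, true_and] at hq ⊢
      intro h
      have hq2 : q.2 = -q.1 := eq_neg_of_add_eq_zero_right h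
      rw [hq2] at hq
      exact one_ne_zero (by linear_combination -hq : (1 : ZMod p) = 0)
    case hj =>
      intro u hu
      simp only [mem_filter, mem_univ, true_and] at hu ⊢
      field_simp
      ring
    case li =>
      intro q hq
      simp only [mem_filter, mem_univ, true_and] at hq
      obtain ⟨x, y⟩ := q
      simp only at hq ⊢
      have hinv : (x + y)⁻¹ = y - x := by
        apply inv_eq_of_mul_eq_one_right
        linear_combination hq
      rw [hinv, Prod.mk.injEq]
      constructor
      · field_simp; ring
      · field_simp; ring
    case ri =>
      intro u hu
      simp only [mem_filter, mem_univ, true_and] at hu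
      field_simp
      ring
  rw [key, Finset.filter_ne', Finset.card_erase_of_mem (mem_univ 0), Finset.card_univ,
    ZMod.card]

lemma key_count (hp2 : p ≠ 2) :
    p / 2 ≤ (univ.filter fun b : ZMod p => ¬ IsSquare (1 + b ^ 2)).card := by
  haveI : NeZero p := ⟨(Fact.out : p.Prime).ne_zero⟩
  have hpp : p.Prime := Fact.out
  have hodd : p % 2 = 1 := Nat.odd_iff.mp (hpp.odd_of_ne_two hp2)
  set A := univ.filter (fun b : ZMod p => IsSquare (1 + b ^ 2) ∧ 1 + b ^ 2 ≠ 0) with hA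
  set Z := univ.filter (fun b : ZMod p => 1 + b ^ 2 = 0) with hZdef
  have hmain : 2 * A.card + Z.card = p - 1 := by
    have hc := card_circle (p := p) hp2
    rw [Finset.card_filter] at hc
    rw [Fintype.sum_prod_type] at hc
    have hstep : ∀ x : ZMod p, (∑ y : ZMod p, if y ^ 2 = 1 + x ^ 2 then 1 else 0)
        = if 1 + x ^ 2 = 0 then 1 else if IsSquare (1 + x ^ 2) then 2 else 0 := by
      intro x
      rw [← Finset.card_filter]
      exact card_sqrt hp2 _
    simp only [hstep] at hc
    have hpoint : ∀ x : ZMod p,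
        (if 1 + x ^ 2 = 0 then 1 else if IsSquare (1 + x ^ 2) then 2 else 0)
          = 2 * (if IsSquare (1 + x ^ 2) ∧ 1 + x ^ 2 ≠ 0 then 1 else 0)
            + (if 1 + x ^ 2 = 0 then 1 else 0) := by
      intro x
      by_cases h0 : 1 + x ^ 2 = 0
      · simp [h0]
      · by_cases hs : IsSquare (1 + x ^ 2) <;> simp [h0, hs]
    simp only [hpoint] at hc
    rw [Finset.sum_add_distrib, ← Finset.mul_sum, ← Finset.card_filter, ← Finset.card_filter]
      at hc
    exact hc
  have hZ : Z.card ≤ 2 := by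
    have : Z = univ.filter (fun b : ZMod p => b ^ 2 = -1) := by
      ext b
      simp only [hZdef, mem_filter, mem_univ, true_and]
      constructor
      · intro h; linear_combination h
      · intro h; linear_combination h
    rw [this, card_sqrt hp2]
    split_ifs <;> omega
  have hsplit : (univ.filter fun b : ZMod p => IsSquare (1 + b ^ 2)).card
      = A.card + Z.card := by
    have hunion : (univ.filter fun b : ZMod p => IsSquare (1 + b ^ 2)) = A ∪ Z := by
      ext b
      simp only [hA, hZdef, mem_filter, mem_univ, true_and, mem_union]
      constructor
      · intro h
        by_cases h0 : 1 + b ^ 2 = 0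
        · exact Or.inr h0
        · exact Or.inl ⟨h, h0⟩
      · rintro (⟨h, _⟩ | h)
        · exact h
        · rw [h]; exact ⟨0, by ring⟩
    rw [hunion, Finset.card_union_of_disjoint]
    rw [Finset.disjoint_left]
    intro b hb hbz
    simp only [hA, mem_filter] at hb
    simp only [hZdef, mem_filter] at hbz
    exact hb.2.2 hbz.2
  have hcompl : (univ.filter fun b : ZMod p => ¬ IsSquare (1 + b ^ 2)).card
      + (univ.filter fun b : ZMod p => IsSquare (1 + b ^ 2)).card = p := by
    rw [add_comm, Finset.card_filter_add_card_filter_not, Finset.card_univ, ZMod.card]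
  omega

lemma key_a (hp2 : p ≠ 2) {a : ZMod p} (ha : a ≠ 0) :
    p / 2 ≤ (univ.filter fun b : ZMod p => ¬ IsSquare (a ^ 2 + b ^ 2)).card := by
  refine le_trans (key_count hp2) (Finset.card_le_card_of_injOn (fun b => a * b) ?_ ?_)
  · intro b hb
    simp only [Finset.mem_coe, mem_filter, mem_univ, true_and] at hb ⊢
    rintro ⟨r, hr⟩
    refine hb ⟨r * a⁻¹, ?_⟩
    field_simp
    linear_combination hr
  · intro x _ y _ h
    exact mul_left_cancel₀ ha h

lemma card_inner (a e : ZMod p) :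
    (∑ d : ZMod p, if a * d = e then 1 else 0)
      = if a = 0 then (if e = 0 then p else 0) else 1 := by
  haveI : NeZero p := ⟨(Fact.out : p.Prime).ne_zero⟩
  split_ifs with h0 he
  · subst h0; subst he
    simp [Finset.card_univ, ZMod.card]
  · subst h0
    simp [Ne.symm he]
  · have heq : ∀ d : ZMod p, (a * d = e) = (d = a⁻¹ * e) := by
      intro d
      apply propext
      constructor
      · intro h; field_simp [← h]; linear_combination h
      · intro h; rw [h]; field_simp
    simp_rw [heq]
    simp

lemma card_M :
    (univ.filter fun q : ZMod p × ZMod p × ZMod p × ZMod p =>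
      q.1 * q.2.2.2 = q.2.1 * q.2.2.1).card + p = p ^ 3 + p ^ 2 := by
  haveI : NeZero p := ⟨(Fact.out : p.Prime).ne_zero⟩
  have hbc : ∀ b : ZMod p, (∑ c : ZMod p, if b * c = 0 then (p : ℕ) else 0)
      = if b = 0 then p * p else p := by
    intro b
    by_cases hb : b = 0
    · subst hb
      simp [Finset.sum_const, Finset.card_univ, ZMod.card, smul_eq_mul]
    · have heq : ∀ c : ZMod p, (b * c = 0) = (c = 0) := by
        intro c
        exact propext ⟨fun h => (mul_eq_zero.mp h).resolve_left hb,
          fun h => by rw [h, mul_zero]⟩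
      simp_rw [heq]
      simp [hb]
  have hcard : (univ.filter fun q : ZMod p × ZMod p × ZMod p × ZMod p =>
      q.1 * q.2.2.2 = q.2.1 * q.2.2.1).card
      = (p * p + (p - 1) * p) + (p - 1) * (p * p) := by
    rw [Finset.card_filter, Fintype.sum_prod_type]
    simp_rw [Fintype.sum_prod_type]
    have hrw : ∀ a b c : ZMod p, (∑ d : ZMod p, if a * d = b * c then 1 else 0)
        = if a = 0 then (if b * c = 0 then p else 0) else 1 := fun a b c => card_inner a (b * c)
    simp_rw [hrw]
    rw [← Finset.add_sum_erase _ _ (mem_univ (0 : ZMod p))]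
    congr 1
    · simp only [if_pos rfl, if_true]
      simp_rw [hbc]
      rw [← Finset.add_sum_erase _ _ (mem_univ (0 : ZMod p))]
      congr 1
      · simp
      · rw [Finset.sum_congr rfl (fun b hb => if_neg (Finset.mem_erase.mp hb).1),
          Finset.sum_const, Finset.card_erase_of_mem (mem_univ 0), Finset.card_univ,
          ZMod.card, smul_eq_mul]
    · have : ∀ a ∈ univ.erase (0 : ZMod p),
          (∑ b : ZMod p, ∑ c : ZMod p,
            if a = 0 then (if b * c = 0 then (p:ℕ) else 0) else 1) = p * p := by
        intro a ha
        rw [Finset.sum_congr rfl (fun b _ => Finset.sum_congr rfl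
          (fun c _ => if_neg (Finset.mem_erase.mp ha).1))]
        simp [Finset.sum_const, Finset.card_univ, ZMod.card, smul_eq_mul]
      rw [Finset.sum_congr rfl this, Finset.sum_const,
        Finset.card_erase_of_mem (mem_univ 0), Finset.card_univ, ZMod.card, smul_eq_mul]
  rw [hcard]
  obtain ⟨k, hk⟩ : ∃ k, p = k + 1 := ⟨p - 1, by have := (Fact.out : p.Prime).pos; omega⟩
  subst hk
  simp only [Nat.add_sub_cancel]
  ring

lemma card_D (hp2 : p ≠ 2) :
    (p - 1) * (p / 2 * (p / 2)) ≤ (univ.filter fun q : ZMod p × ZMod p × ZMod p × ZMod p =>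
      q.1 * q.2.2.2 = q.2.1 * q.2.2.1 ∧ ¬IsSquare (q.1 ^ 2 + q.2.1 ^ 2) ∧
        ¬IsSquare (q.1 ^ 2 + q.2.2.1 ^ 2)).card := by
  haveI : NeZero p := ⟨(Fact.out : p.Prime).ne_zero⟩
  rw [Finset.card_filter, Fintype.sum_prod_type]
  simp_rw [Fintype.sum_prod_type]
  have hin : ∀ a b c : ZMod p,
      (∑ d : ZMod p, if (a * d = b * c ∧ ¬IsSquare (a ^ 2 + b ^ 2) ∧
          ¬IsSquare (a ^ 2 + c ^ 2)) then 1 else 0)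
      = (if ¬IsSquare (a ^ 2 + b ^ 2) then 1 else 0) *
          (if ¬IsSquare (a ^ 2 + c ^ 2) then 1 else 0) := by
    intro a b c
    by_cases h : ¬IsSquare (a ^ 2 + b ^ 2) ∧ ¬IsSquare (a ^ 2 + c ^ 2)
    · have ha : a ≠ 0 := fun h0 => h.1 (by rw [h0]; exact ⟨b, by ring⟩)
      rw [if_pos h.1, if_pos h.2, one_mul]
      have hC := card_inner (p := p) a (b * c)
      rw [if_neg ha] at hC
      exact (Finset.sum_congr rfl fun d _ =>
        if_congr ⟨fun hh => hh.1, fun hh => ⟨hh, h.1, h.2⟩⟩ rfl rfl).trans hC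
    · have hz : (if ¬IsSquare (a ^ 2 + b ^ 2) then 1 else 0) *
          (if ¬IsSquare (a ^ 2 + c ^ 2) then 1 else 0) = 0 := by
        rcases not_and_or.mp h with h' | h' <;> simp [not_not.mp (fun hh => h' hh)]
      rw [hz]
      exact Finset.sum_eq_zero fun d _ => if_neg (fun hh => h ⟨hh.2.1, hh.2.2⟩)
  simp_rw [hin]
  have hsum : ∀ a : ZMod p, (∑ b : ZMod p, ∑ c : ZMod p,
      (if ¬IsSquare (a ^ 2 + b ^ 2) then 1 else 0) *
        (if ¬IsSquare (a ^ 2 + c ^ 2) then 1 else 0))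
      = (univ.filter fun b : ZMod p => ¬IsSquare (a ^ 2 + b ^ 2)).card *
        (univ.filter fun c : ZMod p => ¬IsSquare (a ^ 2 + c ^ 2)).card := by
    intro a
    rw [← Finset.sum_mul_sum, ← Finset.card_filter]
  simp_rw [hsum]
  calc (p - 1) * (p / 2 * (p / 2))
      = ∑ _a ∈ univ.erase (0 : ZMod p), (p / 2 * (p / 2)) := by
        rw [Finset.sum_const, Finset.card_erase_of_mem (mem_univ 0), Finset.card_univ,
          ZMod.card, smul_eq_mul]
    _ ≤ ∑ a ∈ univ.erase (0 : ZMod p), (univ.filter fun b : ZMod p =>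
          ¬IsSquare (a ^ 2 + b ^ 2)).card * (univ.filter fun c : ZMod p =>
          ¬IsSquare (a ^ 2 + c ^ 2)).card := by
        refine Finset.sum_le_sum fun a ha => ?_
        have h1 := key_a hp2 (Finset.mem_erase.mp ha).1
        exact Nat.mul_le_mul h1 h1
    _ ≤ _ := Finset.sum_le_sum_of_subset (Finset.subset_univ _)

end Stmt10

theorem stmt_10 (p : ℕ) (hp : p.Prime) :
    (Set.ncard {q : ZMod p × ZMod p × ZMod p × ZMod p |
        q ≠ (0, 0, 0, 0) ∧ q.1 * q.2.2.2 = q.2.1 * q.2.2.1 ∧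
        (IsSquare (q.1 ^ 2 + q.2.1 ^ 2) ∨ IsSquare (q.1 ^ 2 + q.2.2.1 ^ 2))} : ℝ)
      ≤ (3 / 4 + 1 / (p : ℝ)) * ((p : ℝ) + 1) ^ 2 * ((p : ℝ) - 1) := by
  classical
  haveI : Fact p.Prime := ⟨hp⟩
  haveI : NeZero p := ⟨hp.ne_zero⟩
  open Finset in
  set T := Finset.univ.filter (fun q : ZMod p × ZMod p × ZMod p × ZMod p =>
    q ≠ (0, 0, 0, 0) ∧ q.1 * q.2.2.2 = q.2.1 * q.2.2.1 ∧
      (IsSquare (q.1 ^ 2 + q.2.1 ^ 2) ∨ IsSquare (q.1 ^ 2 + q.2.2.1 ^ 2))) with hTdef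
  set M := Finset.univ.filter (fun q : ZMod p × ZMod p × ZMod p × ZMod p =>
    q.1 * q.2.2.2 = q.2.1 * q.2.2.1) with hMdef
  set D := Finset.univ.filter (fun q : ZMod p × ZMod p × ZMod p × ZMod p =>
    q.1 * q.2.2.2 = q.2.1 * q.2.2.1 ∧ ¬IsSquare (q.1 ^ 2 + q.2.1 ^ 2) ∧
      ¬IsSquare (q.1 ^ 2 + q.2.2.1 ^ 2)) with hDdef
  have hset : {q : ZMod p × ZMod p × ZMod p × ZMod p |
      q ≠ (0, 0, 0, 0) ∧ q.1 * q.2.2.2 = q.2.1 * q.2.2.1 ∧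
      (IsSquare (q.1 ^ 2 + q.2.1 ^ 2) ∨ IsSquare (q.1 ^ 2 + q.2.2.1 ^ 2))} = ↑T := by
    ext q
    simp [hTdef]
  rw [hset, Set.ncard_coe_finset]
  have h0M : ((0,0,0,0) : ZMod p × ZMod p × ZMod p × ZMod p) ∈ M := by
    simp [hMdef]
  have hTM : T ⊆ M.erase (0,0,0,0) := by
    intro q hq
    simp only [hTdef, Finset.mem_filter, Finset.mem_univ, true_and] at hq
    exact Finset.mem_erase.mpr ⟨hq.1, by simp [hMdef, hq.2.1]⟩
  have hDM : D ⊆ M.erase (0,0,0,0) := by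
    intro q hq
    simp only [hDdef, Finset.mem_filter, Finset.mem_univ, true_and] at hq
    refine Finset.mem_erase.mpr ⟨?_, by simp [hMdef, hq.1]⟩
    rintro rfl
    exact hq.2.1 (by norm_num)
  have hdisj : Disjoint T D := by
    rw [Finset.disjoint_left]
    intro q hq hq'
    simp only [hTdef, Finset.mem_filter, Finset.mem_univ, true_and] at hq
    simp only [hDdef, Finset.mem_filter, Finset.mem_univ, true_and] at hq'
    rcases hq.2.2 with h | h
    · exact hq'.2.1 h
    · exact hq'.2.2 h
  have hcards : T.card + D.card + 1 ≤ M.card := by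
    have h1 : T.card + D.card = (T ∪ D).card := (Finset.card_union_of_disjoint hdisj).symm
    have h2 : (T ∪ D).card ≤ (M.erase (0,0,0,0)).card :=
      Finset.card_le_card (Finset.union_subset hTM hDM)
    have h3 : (M.erase (0,0,0,0)).card + 1 = M.card :=
      Finset.card_erase_add_one h0M
    omega
  have hM : M.card + p = p ^ 3 + p ^ 2 := Stmt10.card_M
  by_cases hp2 : p = 2
  · subst hp2
    have hT9 : T.card ≤ 9 := by omega
    have : (T.card : ℝ) ≤ 9 := by exact_mod_cast hT9
    calc (T.card : ℝ) ≤ 9 := this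
      _ ≤ (3 / 4 + 1 / ((2:ℕ) : ℝ)) * (((2:ℕ) : ℝ) + 1) ^ 2 * (((2:ℕ) : ℝ) - 1) := by
          norm_num
  · have hD := Stmt10.card_D (p := p) hp2
    have hodd : p % 2 = 1 := Nat.odd_iff.mp (hp.odd_of_ne_two hp2)
    obtain ⟨k, hk⟩ : ∃ k, p = 2 * k + 1 := ⟨p / 2, by omega⟩
    have hk1 : 1 ≤ k := by
      rcases Nat.lt_or_ge k 1 with h | h
      · interval_cases k
        · exact absurd (hk ▸ hp) (by norm_num)
      · exact h
    have hDk : 2 * k * (k * k) ≤ D.card := by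
      have e1 : p - 1 = 2 * k := by omega
      have e2 : p / 2 = k := by omega
      rw [e1, e2] at hD
      refine le_trans hD (le_of_eq ?_)
      congr 1
    -- real arithmetic
    have hx1 : (1 : ℝ) ≤ (k : ℝ) := by exact_mod_cast hk1
    have hpk : (p : ℝ) = 2 * (k : ℝ) + 1 := by exact_mod_cast congrArg (Nat.cast : ℕ → ℝ) hk
    have hMr : (M.card : ℝ) + (p : ℝ) = (p : ℝ) ^ 3 + (p : ℝ) ^ 2 := by exact_mod_cast hM
    have hDr : 2 * (k : ℝ) * ((k : ℝ) * (k : ℝ)) ≤ (D.card : ℝ) := by exact_mod_cast hDk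
    have hTr : (T.card : ℝ) + (D.card : ℝ) + 1 ≤ (M.card : ℝ) := by exact_mod_cast hcards
    rw [hpk]
    set x : ℝ := (k : ℝ) with hxdef
    have hkey : (T.card : ℝ) ≤ (2*x+1)^3 + (2*x+1)^2 - (2*x+1) - 1 - 2*x*(x*x) := by
      rw [hpk] at hMr
      nlinarith [hDr, hTr, hMr]
    refine hkey.trans ?_
    have hpos : (0:ℝ) < 2 * x + 1 := by linarith
    rw [show (3 / 4 + 1 / (2*x+1)) = (6*x+7) / (4*(2*x+1)) by field_simp; ring]
    rw [div_mul_eq_mul_div, div_mul_eq_mul_div, le_div_iff₀ (by linarith)]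
    nlinarith [sq_nonneg x, hx1]
end

section
/- Let a,b,c,d ∈ ℚ with ad − bc ≠ 0, and let (x,y,z) ∈ ℚ³ with (x,z) ≠ (0,0) satisfy y² = (a(z² − x²) + 2bxz)² + (c(z² − x²) + 2dxz)². Set u₁ = −c(z² − x²) − 2dxz, v₁ = a(z² − x²) + 2bxz, u₂ = z² − x², v₂ = 2xz. Then (u₁,v₁) ≠ (0,0), (u₂,v₂) ≠ (0,0), a·u₁·u₂ + b·u₁·v₂ + c·v₁·u₂ + d·v₁·v₂ = 0, and there exist w₁, w₂ ∈ ℚ with u₁² + v₁² = w₁² and u₂² + v₂² = w₂². -/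
/-!
The map `(x : z) ↦ (z² - x² : 2xz)` parametrises the rational points `(u : v)` with `u² + v²` a
square, since `(z² - x²)² + (2xz)² = (x² + z²)²`. Applying the invertible matrix `η` (rotated by a
quarter turn) to this point gives a point `(u₁ : v₁)` on the line `F_η` through `(u₂ : v₂)`, and the
equation of `H_η` says exactly that `u₁² + v₁²` is the square `y²`.
-/

theorem eq_zero_of_det_ne_zero {R : Type*} [CommRing R] [NoZeroDivisors R] {a b c d u v : R}
    (hdet : a * d - b * c ≠ 0) (h₁ : a * u + b * v = 0) (h₂ : c * u + d * v = 0) :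
    u = 0 ∧ v = 0 := by
  constructor
  · refine (mul_eq_zero.mp ?_).resolve_left hdet
    linear_combination d * h₁ - b * h₂
  · refine (mul_eq_zero.mp ?_).resolve_left hdet
    linear_combination a * h₂ - c * h₁

theorem sq_sub_sq_add_two_mul_sq {R : Type*} [CommRing R] (x z : R) :
    (z ^ 2 - x ^ 2) ^ 2 + (2 * x * z) ^ 2 = (x ^ 2 + z ^ 2) ^ 2 := by
  ring

theorem sq_sub_sq_two_mul_ne_zero {R : Type*} [CommRing R] [LinearOrder R] [IsStrictOrderedRing R]
    {x z : R} (hxz : (x, z) ≠ (0, 0)) : (z ^ 2 - x ^ 2, 2 * x * z) ≠ (0, 0) := by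
  rintro h
  simp only [Prod.mk.injEq] at h
  have hsum : x ^ 2 + z ^ 2 = 0 := by
    have := sq_sub_sq_add_two_mul_sq x z
    rw [h.1, h.2] at this
    exact pow_eq_zero_iff two_ne_zero |>.mp (by simpa using this.symm)
  obtain ⟨hx, hz⟩ := (add_eq_zero_iff_of_nonneg (sq_nonneg x) (sq_nonneg z)).mp hsum
  exact hxz (by simp [pow_eq_zero_iff two_ne_zero |>.mp hx, pow_eq_zero_iff two_ne_zero |>.mp hz])

theorem stmt_12 (a b c d : ℚ) (hdet : a * d - b * c ≠ 0)
    (x y z : ℚ) (hxz : (x, z) ≠ (0, 0))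
    (heq : y ^ 2 = (a * (z ^ 2 - x ^ 2) + 2 * b * x * z) ^ 2 +
      (c * (z ^ 2 - x ^ 2) + 2 * d * x * z) ^ 2)
    (u₁ v₁ u₂ v₂ : ℚ)
    (hu₁ : u₁ = -c * (z ^ 2 - x ^ 2) - 2 * d * x * z)
    (hv₁ : v₁ = a * (z ^ 2 - x ^ 2) + 2 * b * x * z)
    (hu₂ : u₂ = z ^ 2 - x ^ 2) (hv₂ : v₂ = 2 * x * z) :
    (u₁, v₁) ≠ (0, 0) ∧ (u₂, v₂) ≠ (0, 0) ∧
      a * u₁ * u₂ + b * u₁ * v₂ + c * v₁ * u₂ + d * v₁ * v₂ = 0 ∧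
      (∃ w₁ : ℚ, u₁ ^ 2 + v₁ ^ 2 = w₁ ^ 2) ∧ (∃ w₂ : ℚ, u₂ ^ 2 + v₂ ^ 2 = w₂ ^ 2) := by
  subst hu₁ hv₁ hu₂ hv₂
  have hpoint := sq_sub_sq_two_mul_ne_zero hxz
  refine ⟨?_, hpoint, by ring, ⟨y, by linear_combination -heq⟩,
    ⟨x ^ 2 + z ^ 2, sq_sub_sq_add_two_mul_sq x z⟩⟩
  rintro h
  simp only [Prod.mk.injEq] at h
  obtain ⟨hu, hv⟩ := eq_zero_of_det_ne_zero (u := z ^ 2 - x ^ 2) (v := 2 * x * z) hdet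
    (by linear_combination h.2)
    (by linear_combination -h.1)
  exact hpoint (by rw [hu, hv])
end

section
/- Let a,b,c,d ∈ ℚ with ad − bc ≠ 0. Let (u₁,v₁), (u₂,v₂) ∈ ℚ² with (u₁,v₁) ≠ (0,0) and (u₂,v₂) ≠ (0,0), such that a·u₁·u₂ + b·u₁·v₂ + c·v₁·u₂ + d·v₁·v₂ = 0 and there exist w₁, w₂ ∈ ℚ with u₁² + v₁² = w₁² and u₂² + v₂² = w₂². Then there exist (x,y,z) ∈ ℚ³ with (x,z) ≠ (0,0) satisfying y² = (a(z² − x²) + 2bxz)² + (c(z² − x²) + 2dxz)², together with nonzero μ, ν ∈ ℚ such that (z² − x², 2xz) = (μ·u₂, μ·v₂) and (−c(z² − x²) − 2dxz, a(z² − x²) + 2bxz) = (ν·u₁, ν·v₁). -/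
/-!
Rational points on the circle `u² + v² = w²` are parametrised by `(u : v) = (z² - x² : 2xz)`,
so `(u₂ : v₂)` has such a preimage `(x : z)`. The vanishing of the bilinear form says that
`η (u₂, v₂)` is orthogonal to `(u₁, v₁)`, so its rotation `(-c u₂ - d v₂, a u₂ + b v₂)` is a
nonzero multiple `t (u₁, v₁)`; scaling by `μ` gives `ν = μ t`, and `y = ν w₁` then lies on `H_η`.
-/

section

variable {K : Type*} [Field K]

theorem exists_sq_eq_and_add_ne_zero [NeZero (2 : K)] {u v w : K} (huv : (u, v) ≠ (0, 0))
    (hw : u ^ 2 + v ^ 2 = w ^ 2) : ∃ w' : K, u ^ 2 + v ^ 2 = w' ^ 2 ∧ u + w' ≠ 0 := by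
  by_cases h : u + w = 0
  · refine ⟨-w, by rw [hw]; ring, fun h' => huv ?_⟩
    have hu : u = 0 := by
      have : 2 * u = 0 := by linear_combination h + h'
      simpa [two_ne_zero] using this
    have hv : v ^ 2 = 0 := by linear_combination hw + (w - u) * h
    simp [hu, pow_eq_zero_iff two_ne_zero |>.mp hv]
  · exact ⟨w, hw, h⟩

theorem exists_circle_param [NeZero (2 : K)] {u v w : K} (huv : (u, v) ≠ (0, 0))
    (hw : u ^ 2 + v ^ 2 = w ^ 2) :
    ∃ x z μ : K, (x, z) ≠ (0, 0) ∧ μ ≠ 0 ∧ (z ^ 2 - x ^ 2, 2 * x * z) = (μ * u, μ * v) := by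
  obtain ⟨w', hw', hne⟩ := exists_sq_eq_and_add_ne_zero huv hw
  refine ⟨v, u + w', 2 * (u + w'), by simp [hne], mul_ne_zero two_ne_zero hne, ?_⟩
  rw [Prod.mk.injEq]
  exact ⟨by linear_combination -hw', by ring⟩

theorem exists_rotate_eq_smul_of_orthogonal {u v p q : K} (huv : (u, v) ≠ (0, 0))
    (hpq : (p, q) ≠ (0, 0)) (horth : u * p + v * q = 0) :
    ∃ t : K, t ≠ 0 ∧ (-q, p) = (t * u, t * v) := by
  obtain ⟨t, ht⟩ : ∃ t : K, (-q, p) = (t * u, t * v) := by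
    by_cases hv : v = 0
    · have hu : u ≠ 0 := fun hu => huv (by simp [hu, hv])
      have hp : p = 0 := by simpa [hv, hu] using horth
      exact ⟨-q / u, by rw [Prod.mk.injEq]; exact ⟨by field_simp, by simp [hp, hv]⟩⟩
    · exact ⟨p / v, by rw [Prod.mk.injEq]; exact ⟨by field_simp; linear_combination -horth,
        by field_simp⟩⟩
  refine ⟨t, fun ht0 => hpq ?_, ht⟩
  simp only [ht0, zero_mul, Prod.mk.injEq, neg_eq_zero] at ht
  simp [ht.1, ht.2]

theorem apply_ne_zero_of_det_ne_zero {a b c d u v : K} (hdet : a * d - b * c ≠ 0)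
    (huv : (u, v) ≠ (0, 0)) : (a * u + b * v, c * u + d * v) ≠ (0, 0) := by
  intro h
  simp only [Prod.mk.injEq] at h
  obtain ⟨h₁, h₂⟩ := h
  have hu : (a * d - b * c) * u = 0 := by linear_combination d * h₁ - b * h₂
  have hv : (a * d - b * c) * v = 0 := by linear_combination a * h₂ - c * h₁
  exact huv (by
    simp [(mul_eq_zero.mp hu).resolve_left hdet, (mul_eq_zero.mp hv).resolve_left hdet])

end

theorem stmt_13 (a b c d : ℚ) (hdet : a * d - b * c ≠ 0)
    (u₁ v₁ u₂ v₂ : ℚ) (h₁ : (u₁, v₁) ≠ (0, 0)) (h₂ : (u₂, v₂) ≠ (0, 0))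
    (hF : a * u₁ * u₂ + b * u₁ * v₂ + c * v₁ * u₂ + d * v₁ * v₂ = 0)
    (hw₁ : ∃ w₁ : ℚ, u₁ ^ 2 + v₁ ^ 2 = w₁ ^ 2) (hw₂ : ∃ w₂ : ℚ, u₂ ^ 2 + v₂ ^ 2 = w₂ ^ 2) :
    ∃ x y z : ℚ, (x, z) ≠ (0, 0) ∧
      y ^ 2 = (a * (z ^ 2 - x ^ 2) + 2 * b * x * z) ^ 2 +
        (c * (z ^ 2 - x ^ 2) + 2 * d * x * z) ^ 2 ∧
      ∃ μ ν : ℚ, μ ≠ 0 ∧ ν ≠ 0 ∧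
        (z ^ 2 - x ^ 2, 2 * x * z) = (μ * u₂, μ * v₂) ∧
        (-c * (z ^ 2 - x ^ 2) - 2 * d * x * z, a * (z ^ 2 - x ^ 2) + 2 * b * x * z) =
          (ν * u₁, ν * v₁) := by
  obtain ⟨w₁, hw₁⟩ := hw₁
  obtain ⟨w₂, hw₂⟩ := hw₂
  obtain ⟨x, z, μ, hxz0, hμ, hxz⟩ := exists_circle_param h₂ hw₂
  obtain ⟨t, ht, hrot⟩ := exists_rotate_eq_smul_of_orthogonal h₁
    (apply_ne_zero_of_det_ne_zero hdet h₂) (by linear_combination hF)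
  simp only [Prod.mk.injEq] at hxz hrot
  have hη : (-c * (z ^ 2 - x ^ 2) - 2 * d * x * z, a * (z ^ 2 - x ^ 2) + 2 * b * x * z) =
      ((μ * t) * u₁, (μ * t) * v₁) := by
    rw [Prod.mk.injEq]
    constructor
    · linear_combination (-c) * hxz.1 - d * hxz.2 + μ * hrot.1
    · linear_combination a * hxz.1 + b * hxz.2 + μ * hrot.2
  refine ⟨x, μ * t * w₁, z, hxz0, ?_, μ, μ * t, hμ, mul_ne_zero hμ ht, Prod.ext hxz.1 hxz.2, hη⟩
  simp only [Prod.mk.injEq] at hη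
  rw [hη.2, show c * (z ^ 2 - x ^ 2) + 2 * d * x * z = -(μ * t * u₁) by linear_combination -hη.1]
  linear_combination -(μ * t) ^ 2 * hw₁
end

section
/- If s, y ∈ ℚ satisfy y² = s⁴ + 14s² + 1, then (s, y) is one of the six points (0, 1), (0, −1), (1, 4), (1, −4), (−1, 4), (−1, −4); in particular s ∈ {−1, 0, 1}. -/
lemma zmod3_aux : ∀ x y : ZMod 3, x^2 + y^2 = 0 → x = 0 ∧ y = 0 := by decide

/-- Core conic step: from c²(a²+f²) = d²(a²+4f²) with suitable coprimality,
    deduce c² = g⁴+14g²h²+h⁴ for a nontrivial coprime pair. -/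
lemma inner_descent (a c d f : ℕ) (ha2 : a % 2 = 1) (ha : 1 ≤ a) (hd : 1 ≤ d)
    (hf : 1 ≤ f) (haf : Nat.Coprime a f) (hcd : Nat.Coprime c d)
    (heq : c^2 * (a^2 + f^2) = d^2 * (a^2 + 4*f^2)) :
    ∃ g h : ℕ, Nat.Coprime g h ∧ 1 ≤ g ∧ 1 ≤ h ∧ g ≠ h ∧
      c^2 = g^4 + 14*g^2*h^2 + h^4 := by
  -- d² divides a²+f²
  have hdvd : d^2 ∣ a^2 + f^2 := by
    have h1 : d^2 ∣ c^2 * (a^2 + f^2) := ⟨a^2 + 4*f^2, by linarith [heq]⟩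
    exact (hcd.symm.pow 2 2).dvd_of_dvd_mul_left h1
  obtain ⟨k, hk⟩ := hdvd
  have hck : c^2 * k = a^2 + 4*f^2 := by
    have hd2 : 0 < d^2 := by positivity
    have h5 : d^2 * (c^2 * k) = d^2 * (a^2 + 4*f^2) := by
      rw [← heq, hk]; ring
    exact Nat.eq_of_mul_eq_mul_left hd2 h5
  have hkpos : 1 ≤ k := by
    rcases Nat.eq_zero_or_pos k with h0 | h1
    · exfalso; subst h0; rw [mul_zero] at hck; nlinarith
    · exact h1
  -- k divides 3a² and 3f²
  have hk3a : k ∣ 3 * a^2 := by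
    have h1 : k ∣ 4 * (a^2 + f^2) := ⟨4 * d^2, by rw [hk]; ring⟩
    have h2 : k ∣ a^2 + 4*f^2 := ⟨c^2, by rw [← hck]; ring⟩
    have := Nat.dvd_sub h1 h2
    have he : 4 * (a^2 + f^2) - (a^2 + 4*f^2) = 3 * a^2 := by omega
    rwa [he] at this
  have hk3f : k ∣ 3 * f^2 := by
    have h1 : k ∣ a^2 + 4*f^2 := ⟨c^2, by rw [← hck]; ring⟩
    have h2 : k ∣ a^2 + f^2 := ⟨d^2, by rw [hk]; ring⟩
    have := Nat.dvd_sub h1 h2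
    have he : a^2 + 4*f^2 - (a^2 + f^2) = 3 * f^2 := by omega
    rwa [he] at this
  have hk3 : k ∣ 3 := by
    have := Nat.dvd_gcd hk3a hk3f
    rwa [Nat.gcd_mul_left, haf.pow 2 2, mul_one] at this
  have hknot3 : k ≠ 3 := by
    intro h3
    subst h3
    -- a² + f² = 3 d² forces 3 ∣ a and 3 ∣ f
    have hz : ((a : ZMod 3))^2 + (f : ZMod 3)^2 = 0 := by
      have : ((a^2 + f^2 : ℕ) : ZMod 3) = ((d^2 * 3 : ℕ) : ZMod 3) := by
        rw [hk]
      push_cast at this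
      rw [this]
      have h30 : (3 : ZMod 3) = 0 := by decide
      rw [mul_comm, h30, zero_mul]
    obtain ⟨hza, hzf⟩ := zmod3_aux _ _ hz
    have h3a : (3:ℕ) ∣ a := (ZMod.natCast_eq_zero_iff a 3).mp hza
    have h3f : (3:ℕ) ∣ f := (ZMod.natCast_eq_zero_iff f 3).mp hzf
    have : (3:ℕ) ∣ 1 := haf ▸ Nat.dvd_gcd h3a h3f
    omega
  have hk1 : k = 1 := by
    have := (Nat.dvd_prime Nat.prime_three).mp hk3
    omega
  subst hk1
  rw [mul_one] at hck hk
  -- now d² = a² + f², c² = a² + 4f²; f must be even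
  have hfeven : f % 2 = 0 := by
    rcases Nat.even_or_odd f with he | ho
    · exact Nat.even_iff.mp he
    · exfalso
      obtain ⟨x, hx⟩ := Nat.odd_iff.mpr ha2
      obtain ⟨y, hy⟩ := ho
      -- a² + f² ≡ 2 mod 4 but it's a square d²
      have h4 : a^2 + f^2 = 4*(x*x + x + y*y + y) + 2 := by
        subst hx hy; ring
      rcases Nat.even_or_odd d with ⟨e, he⟩ | ⟨e, he⟩
      · subst he
        have h5 : (e + e)^2 = 4*(e*e) := by ring
        omega
      · subst he
        have h5 : (2*e + 1)^2 = 4*(e*e + e) + 1 := by ring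
        omega
  -- Pythagorean triple (a, f, d) over ℤ
  have htrip : PythagoreanTriple (a : ℤ) (f : ℤ) (d : ℤ) := by
    have : (a:ℤ)^2 + (f:ℤ)^2 = (d:ℤ)^2 := by exact_mod_cast hk
    unfold PythagoreanTriple; nlinarith [this]
  have hgcd : Int.gcd (a : ℤ) (f : ℤ) = 1 := by
    rw [Int.gcd_natCast_natCast]; exact haf
  have haodd : (a : ℤ) % 2 = 1 := by omega
  have hdpos : (0 : ℤ) < d := by exact_mod_cast hd
  obtain ⟨m, n, hm1, hm2, hm3, hmn, _, _⟩ :=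
    htrip.coprime_classification' hgcd haodd hdpos
  refine ⟨m.natAbs, n.natAbs, hmn, ?_, ?_, ?_, ?_⟩
  · rcases Nat.eq_zero_or_pos m.natAbs with h0 | h1
    · exfalso
      have : m = 0 := Int.natAbs_eq_zero.mp h0
      subst this
      simp at hm2
      omega
    · exact h1
  · rcases Nat.eq_zero_or_pos n.natAbs with h0 | h1
    · exfalso
      have : n = 0 := Int.natAbs_eq_zero.mp h0
      subst this
      simp at hm2
      omega
    · exact h1
  · intro hgh
    have hsq : m^2 = n^2 := by
      have : (m.natAbs : ℤ)^2 = (n.natAbs : ℤ)^2 := by rw [hgh]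
      rwa [Int.natAbs_sq, Int.natAbs_sq] at this
    have : (a : ℤ) = 0 := by rw [hm1, hsq]; ring
    omega
  · have hcast : (c : ℤ)^2 = (m.natAbs : ℤ)^4 + 14*(m.natAbs:ℤ)^2*(n.natAbs:ℤ)^2 + (n.natAbs:ℤ)^4 := by
      have h1 : (c:ℤ)^2 = (a:ℤ)^2 + 4*(f:ℤ)^2 := by exact_mod_cast hck
      have hm2' : (m.natAbs : ℤ)^2 = m^2 := Int.natAbs_sq m
      have hn2' : (n.natAbs : ℤ)^2 = n^2 := Int.natAbs_sq n
      have hm4 : (m.natAbs : ℤ)^4 = m^4 := by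
        have : ((m.natAbs:ℤ)^2)^2 = (m^2)^2 := by rw [hm2']
        linarith [this]
      have hn4 : (n.natAbs : ℤ)^4 = n^4 := by
        have : ((n.natAbs:ℤ)^2)^2 = (n^2)^2 := by rw [hn2']
        linarith [this]
      rw [hm4, hn4]
      rw [hm2', hn2', h1, hm1, hm2]
      ring
    exact_mod_cast hcast

/-- Factoring descent: from the system A·B = 2·C·D, A²−B² = ±(C²−D²),
    produce a smaller solution of e² = g⁴+14g²h²+h⁴. -/
lemma descent_core (A B C D : ℕ) (hA2 : A % 2 = 1) (hAB : Nat.Coprime A B)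
    (hCD : Nat.Coprime C D) (hC : 1 ≤ C) (hD : 1 ≤ D)
    (hmul : A * B = 2 * (C * D))
    (hsum : A^2 + D^2 = B^2 + C^2 ∨ A^2 + C^2 = B^2 + D^2) :
    ∃ g h e : ℕ, Nat.Coprime g h ∧ 1 ≤ g ∧ 1 ≤ h ∧ g ≠ h ∧ 1 ≤ e ∧ e ≤ A ∧
      e^2 = g^4 + 14*g^2*h^2 + h^4 := by
  have hA1 : 1 ≤ A := by omega
  have hBe : B % 2 = 0 := by
    rcases Nat.even_or_odd B with he | ho
    · exact Nat.even_iff.mp he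
    · exfalso
      obtain ⟨x, hx⟩ := Nat.odd_iff.mpr hA2
      obtain ⟨y, hy⟩ := ho
      have h1 : A * B = (2*x+1)*(2*y+1) := by rw [hx, hy]
      have h2 : (2*x+1)*(2*y+1) = 2*(2*x*y + x + y) + 1 := by ring
      omega
  obtain ⟨B', hB'⟩ : ∃ B', B = 2 * B' := ⟨B / 2, by omega⟩
  subst hB'
  have hABmul : A * B' = C * D := by
    have h2 : 2*(A * B') = 2*(C * D) := by rw [← hmul]; ring
    omega
  have hAB' : Nat.Coprime A B' :=
    Nat.Coprime.coprime_dvd_right ⟨2, by ring⟩ hAB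
  set a := Nat.gcd A C with ha_def
  set c := Nat.gcd A D with hc_def
  set d := Nat.gcd B' C with hd_def
  set f := Nat.gcd B' D with hf_def
  have hAac : a * c = A :=
    (Nat.gcd_mul_gcd_eq_iff_dvd_mul_of_coprime hCD).mpr ⟨B', hABmul.symm⟩
  have hBdf : d * f = B' := by
    refine (Nat.gcd_mul_gcd_eq_iff_dvd_mul_of_coprime hCD).mpr ⟨A, ?_⟩
    rw [← hABmul]; ring
  have hCad : a * d = C := by
    have h1 : Nat.gcd C A * Nat.gcd C B' = C :=
      (Nat.gcd_mul_gcd_eq_iff_dvd_mul_of_coprime hAB').mpr ⟨D, hABmul⟩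
    rw [ha_def, hd_def, Nat.gcd_comm A C, Nat.gcd_comm B' C]
    exact h1
  have hDcf : c * f = D := by
    have h1 : Nat.gcd D A * Nat.gcd D B' = D :=
      (Nat.gcd_mul_gcd_eq_iff_dvd_mul_of_coprime hAB').mpr ⟨C, by rw [hABmul]; ring⟩
    rw [hc_def, hf_def, Nat.gcd_comm A D, Nat.gcd_comm B' D]
    exact h1
  have ha1 : 1 ≤ a := Nat.pos_of_ne_zero (fun h0 => by rw [h0, zero_mul] at hAac; omega)
  have hc1 : 1 ≤ c := Nat.pos_of_ne_zero (fun h0 => by rw [h0, mul_zero] at hAac; omega)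
  have hd1 : 1 ≤ d := Nat.pos_of_ne_zero (fun h0 => by rw [h0, mul_zero] at hCad; omega)
  have hf1 : 1 ≤ f := Nat.pos_of_ne_zero (fun h0 => by rw [h0, mul_zero] at hDcf; omega)
  have hAodd : Odd A := Nat.odd_iff.mpr hA2
  have ha2 : a % 2 = 1 := by
    rcases Nat.even_or_odd a with he | ho
    · exfalso
      exact (Nat.even_iff.mp (hAac ▸ he.mul_right c)) ▸ (by omega : ¬ A % 2 = 0) <| rfl
    · exact Nat.odd_iff.mp ho
  have hc2 : c % 2 = 1 := by
    rcases Nat.even_or_odd c with he | ho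
    · exfalso
      have := Nat.even_iff.mp (hAac ▸ he.mul_left a)
      omega
    · exact Nat.odd_iff.mp ho
  have haf : Nat.Coprime a f :=
    Nat.Coprime.coprime_dvd_right (Nat.gcd_dvd_left B' D)
      (Nat.Coprime.coprime_dvd_left (Nat.gcd_dvd_left A C) hAB')
  have hcd : Nat.Coprime c d :=
    Nat.Coprime.coprime_dvd_right (Nat.gcd_dvd_left B' C)
      (Nat.Coprime.coprime_dvd_left (Nat.gcd_dvd_left A D) hAB')
  have hcA : c ∣ A := ⟨a, by rw [← hAac]; ring⟩
  have haA : a ∣ A := ⟨c, hAac.symm⟩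
  rcases hsum with hsum | hsum
  · -- A²+D² = B²+C² : gives c²(a²+f²) = d²(a²+4f²)
    rw [← hAac, ← hBdf, ← hCad, ← hDcf] at hsum
    have heq : c^2 * (a^2 + f^2) = d^2 * (a^2 + 4*f^2) := by
      zify at hsum ⊢
      linear_combination hsum
    obtain ⟨g, h, hgh, hg1, hh1, hgne, hF⟩ :=
      inner_descent a c d f ha2 ha1 hd1 hf1 haf hcd heq
    exact ⟨g, h, c, hgh, hg1, hh1, hgne, hc1, Nat.le_of_dvd hA1 hcA, hF⟩
  · -- A²+C² = B²+D² : gives a²(c²+d²) = f²(c²+4d²)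
    rw [← hAac, ← hBdf, ← hCad, ← hDcf] at hsum
    have heq : a^2 * (c^2 + d^2) = f^2 * (c^2 + 4*d^2) := by
      zify at hsum ⊢
      linear_combination hsum
    obtain ⟨g, h, hgh, hg1, hh1, hgne, hF⟩ :=
      inner_descent c a f d hc2 hc1 hf1 hd1 hcd haf heq
    exact ⟨g, h, a, hgh, hg1, hh1, hgne, ha1, Nat.le_of_dvd hA1 haA, hF⟩
set_option maxHeartbeats 1000000 in
/-- mixed parity case -/
lemma mixed_case (Y p q : ℕ)
    (IH : ∀ Y' < Y, ∀ p' q' : ℕ, Nat.Coprime p' q' →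
      Y'^2 = p'^4 + 14*p'^2*q'^2 + q'^4 → p' = 0 ∨ q' = 0 ∨ p' = q')
    (hcop : Nat.Coprime p q) (hY : Y^2 = p^4 + 14*p^2*q^2 + q^4)
    (hp : 1 ≤ p) (hq : 1 ≤ q) (hp2 : p % 2 = 1) (hq2 : q % 2 = 0) : False := by
  have hYZ : (Y:ℤ)^2 = (p:ℤ)^4 + 14*(p:ℤ)^2*(q:ℤ)^2 + (q:ℤ)^4 := by exact_mod_cast hY
  have hY1 : 1 ≤ Y := by
    have h4 : 0 < Y^2 := by rw [hY]; positivity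
    rcases Nat.eq_zero_or_pos Y with h0 | h1
    · exfalso; rw [h0] at h4; simp at h4
    · exact h1
  -- odd-ness of p²-q²
  obtain ⟨α, hα⟩ := Nat.odd_iff.mpr hp2
  obtain ⟨β, hβ⟩ : ∃ b, q = 2*b := ⟨q/2, by omega⟩
  have hxodd : ((p:ℤ)^2 - (q:ℤ)^2) % 2 = 1 := by
    have h1 : (p:ℤ)^2 - (q:ℤ)^2 = 2*(2*(α:ℤ)^2 + 2*α - 2*(β:ℤ)^2) + 1 := by
      rw [show (p:ℤ) = 2*(α:ℤ)+1 by exact_mod_cast hα,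
          show (q:ℤ) = 2*(β:ℤ) by exact_mod_cast hβ]
      ring
    omega
  have htrip : PythagoreanTriple ((p:ℤ)^2 - (q:ℤ)^2) (4*(p:ℤ)*(q:ℤ)) (Y:ℤ) := by
    unfold PythagoreanTriple
    linear_combination -hYZ
  have hcopZ : IsCoprime (p:ℤ) (q:ℤ) := by
    rw [Int.isCoprime_iff_gcd_eq_one, Int.gcd_natCast_natCast]; exact hcop
  have h1 : IsCoprime ((p:ℤ)^2 - (q:ℤ)^2) (q:ℤ) := by
    have hpow : IsCoprime ((p:ℤ)^2) (q:ℤ) := hcopZ.pow_left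
    have := hpow.add_mul_left_left (-(q:ℤ))
    have he : (p:ℤ)^2 + (q:ℤ)*(-(q:ℤ)) = (p:ℤ)^2 - (q:ℤ)^2 := by ring
    rwa [he] at this
  have h2 : IsCoprime ((p:ℤ)^2 - (q:ℤ)^2) (p:ℤ) := by
    have hpow : IsCoprime (-(q:ℤ)^2) (p:ℤ) := (hcopZ.symm.pow_left).neg_left
    have := hpow.add_mul_left_left (p:ℤ)
    have he : -(q:ℤ)^2 + (p:ℤ)*(p:ℤ) = (p:ℤ)^2 - (q:ℤ)^2 := by ring
    rwa [he] at this
  have h3 : IsCoprime ((p:ℤ)^2 - (q:ℤ)^2) 2 := by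
    obtain ⟨k, hk⟩ : ∃ k : ℤ, (p:ℤ)^2 - (q:ℤ)^2 = 2*k+1 := ⟨((p:ℤ)^2 - (q:ℤ)^2)/2, by omega⟩
    exact ⟨1, -k, by rw [hk]; ring⟩
  have hgcd : Int.gcd ((p:ℤ)^2 - (q:ℤ)^2) (4*(p:ℤ)*(q:ℤ)) = 1 := by
    rw [← Int.isCoprime_iff_gcd_eq_one]
    have h4 : IsCoprime ((p:ℤ)^2 - (q:ℤ)^2) (2*(2*((p:ℤ)*(q:ℤ)))) :=
      h3.mul_right (h3.mul_right (h2.mul_right h1))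
    have he : (2:ℤ)*(2*((p:ℤ)*(q:ℤ))) = 4*(p:ℤ)*(q:ℤ) := by ring
    rwa [he] at h4
  have hYpos : (0:ℤ) < Y := by exact_mod_cast hY1
  obtain ⟨m, n, hxe, hye, hze, hmncop, hmnpar, hm0⟩ :=
    htrip.coprime_classification' hgcd hxodd hYpos
  set M := m.natAbs with hM
  set N := n.natAbs with hN
  have hmn : m * n = 2 * ((p:ℤ) * q) := by linarith
  have hMN : M * N = 2 * (p * q) := by
    have h5 := congrArg Int.natAbs hmn
    rw [Int.natAbs_mul, Int.natAbs_mul, Int.natAbs_mul] at h5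
    rw [Int.natAbs_natCast, Int.natAbs_natCast] at h5
    norm_num at h5
    exact h5
  have hMNcop : Nat.Coprime M N := hmncop
  have hpq1 : 0 < p * q := Nat.mul_pos hp hq
  have hM1 : 1 ≤ M := by
    rcases Nat.eq_zero_or_pos M with h0 | h1
    · exfalso; rw [h0, zero_mul] at hMN; omega
    · exact h1
  have hN1 : 1 ≤ N := by
    rcases Nat.eq_zero_or_pos N with h0 | h1
    · exfalso; rw [h0, mul_zero] at hMN; omega
    · exact h1
  have hMsq : ((M:ℤ))^2 = m^2 := Int.natAbs_sq m
  have hNsq : ((N:ℤ))^2 = n^2 := Int.natAbs_sq n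
  have hYsum : M^2 + N^2 = Y := by
    have : ((M:ℤ))^2 + ((N:ℤ))^2 = (Y:ℤ) := by rw [hMsq, hNsq, hze]
    exact_mod_cast this
  have hsumZ : ((M:ℤ))^2 + (q:ℤ)^2 = ((N:ℤ))^2 + (p:ℤ)^2 := by
    rw [hMsq, hNsq]
    linarith [hxe]
  have hkey : ∃ g h e : ℕ, Nat.Coprime g h ∧ 1 ≤ g ∧ 1 ≤ h ∧ g ≠ h ∧ 1 ≤ e ∧
      (e ≤ M ∨ e ≤ N) ∧ e^2 = g^4 + 14*g^2*h^2 + h^4 := by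
    rcases hmnpar with ⟨hme, hno⟩ | ⟨hmo, hne⟩
    · -- n odd, m even : use A = N
      have hN2 : N % 2 = 1 := by omega
      have hsum' : N^2 + p^2 = M^2 + q^2 := by exact_mod_cast hsumZ.symm
      obtain ⟨g, h, e, a1, a2, a3, a4, a5, a6, a7⟩ :=
        descent_core N M p q hN2 hMNcop.symm hcop hp hq (by rw [mul_comm]; exact hMN)
          (Or.inr (by omega))
      exact ⟨g, h, e, a1, a2, a3, a4, a5, Or.inr a6, a7⟩
    · -- m odd
      have hM2 : M % 2 = 1 := by omega
      have hsum' : M^2 + q^2 = N^2 + p^2 := by exact_mod_cast hsumZ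
      obtain ⟨g, h, e, a1, a2, a3, a4, a5, a6, a7⟩ :=
        descent_core M N p q hM2 hMNcop hcop hp hq hMN (Or.inl (by omega))
      exact ⟨g, h, e, a1, a2, a3, a4, a5, Or.inl a6, a7⟩
  obtain ⟨g, h, e, hgh, hg1, hh1, hgne, he1, heA, hF⟩ := hkey
  have hMM : M ≤ M^2 := Nat.le_self_pow (by norm_num) M
  have hNN : N ≤ N^2 := Nat.le_self_pow (by norm_num) N
  have hM2pos : 1 ≤ M^2 := Nat.one_le_pow _ _ hM1
  have hN2pos : 1 ≤ N^2 := Nat.one_le_pow _ _ hN1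
  have heY : e < Y := by omega
  rcases IH e heY g h hgh hF with h0 | h0 | h0 <;> omega
set_option maxHeartbeats 1000000 in
/-- both odd case -/
lemma oddodd_case (Y p q : ℕ)
    (IH : ∀ Y' < Y, ∀ p' q' : ℕ, Nat.Coprime p' q' →
      Y'^2 = p'^4 + 14*p'^2*q'^2 + q'^4 → p' = 0 ∨ q' = 0 ∨ p' = q')
    (hcop : Nat.Coprime p q) (hY : Y^2 = p^4 + 14*p^2*q^2 + q^4)
    (hq : 1 ≤ q) (hqp : q < p) (hp2 : p % 2 = 1) (hq2 : q % 2 = 1) : False := by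
  obtain ⟨v, hv, hv1⟩ : ∃ v, p = q + 2*v ∧ 1 ≤ v := ⟨(p-q)/2, by omega, by omega⟩
  subst hv
  obtain ⟨u, hu⟩ : ∃ u, u = q + v := ⟨q + v, rfl⟩
  have hu1 : v < u := by omega
  have huq : 1 ≤ u := by omega
  -- coprimality of u, v
  have hcuv : Nat.Coprime u v := by
    have hd1 : Nat.gcd u v ∣ u := Nat.gcd_dvd_left u v
    have hd2 : Nat.gcd u v ∣ v := Nat.gcd_dvd_right u v
    have hd3 : Nat.gcd u v ∣ q := by
      have := Nat.dvd_sub hd1 hd2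
      simpa [hu] using this
    have hd4 : Nat.gcd u v ∣ q + 2*v := Dvd.dvd.add hd3 (Dvd.dvd.mul_left hd2 2)
    have := Nat.dvd_gcd hd4 hd3
    rw [hcop] at this
    exact Nat.eq_one_of_dvd_one this
  -- reduce to Z² = u⁴ - u²v² + v⁴
  have hZeq : Y^2 + 16*(u^2*v^2) = 16*u^4 + 16*v^4 := by
    zify
    zify at hY
    rw [hu]
    push_cast
    linear_combination hY
  have hYe : Y % 2 = 0 := by
    rcases Nat.even_or_odd Y with he | ho
    · exact Nat.even_iff.mp he
    · exfalso
      obtain ⟨t, ht⟩ := ho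
      have h6 : Y^2 = 4*(t*t+t) + 1 := by rw [ht]; ring
      omega
  obtain ⟨Y₁, hY₁⟩ : ∃ Y₁, Y = 2*Y₁ := ⟨Y/2, by omega⟩
  subst hY₁
  have hsq1 : (2*Y₁)^2 = 4*Y₁^2 := by ring
  have hY₁e : Y₁ % 2 = 0 := by
    rcases Nat.even_or_odd Y₁ with he | ho
    · exact Nat.even_iff.mp he
    · exfalso
      obtain ⟨t, ht⟩ := ho
      have h6 : Y₁^2 = 4*(t*t+t) + 1 := by rw [ht]; ring
      omega
  obtain ⟨Z, hZ⟩ : ∃ Z, Y₁ = 2*Z := ⟨Y₁/2, by omega⟩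
  subst hZ
  have hsq2 : (2*(2*Z))^2 = 16*Z^2 := by ring
  have hZ2 : Z^2 + u^2*v^2 = u^4 + v^4 := by omega
  have hZ1 : 1 ≤ Z := by
    rcases Nat.eq_zero_or_pos Z with h0 | h1
    · exfalso
      rw [h0] at hZ2
      have hZc : (0:ℤ)^2 + (u:ℤ)^2*(v:ℤ)^2 = (u:ℤ)^4 + (v:ℤ)^4 := by exact_mod_cast hZ2
      have huu : (1:ℤ) ≤ (u:ℤ)^2 := by
        have : (1:ℤ) ≤ (u:ℤ) := by exact_mod_cast huq
        nlinarith
      have hvv : (1:ℤ) ≤ (v:ℤ)^2 := by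
        have : (1:ℤ) ≤ (v:ℤ) := by exact_mod_cast hv1
        nlinarith
      nlinarith [sq_nonneg ((u:ℤ)^2 - (v:ℤ)^2)]
    · exact h1
  -- parity of u and v : exactly one odd
  have hpar : (u % 2 = 1 ∧ v % 2 = 0) ∨ (u % 2 = 0 ∧ v % 2 = 1) := by omega
  -- the Pythagorean triple (u²-v², uv, Z)
  have hZ2Z : (Z:ℤ)^2 + (u:ℤ)^2*(v:ℤ)^2 = (u:ℤ)^4 + (v:ℤ)^4 := by exact_mod_cast hZ2
  have htrip : PythagoreanTriple ((u:ℤ)^2 - (v:ℤ)^2) ((u:ℤ)*(v:ℤ)) (Z:ℤ) := by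
    unfold PythagoreanTriple
    linear_combination -hZ2Z
  have hxodd : ((u:ℤ)^2 - (v:ℤ)^2) % 2 = 1 := by
    rcases hpar with ⟨h1, h2⟩ | ⟨h1, h2⟩
    · obtain ⟨α, hα⟩ : ∃ a, u = 2*a+1 := ⟨u/2, by omega⟩
      obtain ⟨β, hβ⟩ : ∃ b, v = 2*b := ⟨v/2, by omega⟩
      have he : (u:ℤ)^2 - (v:ℤ)^2 = 2*(2*(α:ℤ)^2 + 2*α - 2*(β:ℤ)^2) + 1 := by
        rw [show (u:ℤ) = 2*(α:ℤ)+1 by exact_mod_cast hα,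
            show (v:ℤ) = 2*(β:ℤ) by exact_mod_cast hβ]
        ring
      omega
    · obtain ⟨α, hα⟩ : ∃ a, u = 2*a := ⟨u/2, by omega⟩
      obtain ⟨β, hβ⟩ : ∃ b, v = 2*b+1 := ⟨v/2, by omega⟩
      have he : (u:ℤ)^2 - (v:ℤ)^2 = 2*(2*(α:ℤ)^2 - 2*(β:ℤ)^2 - 2*β - 1) + 1 := by
        rw [show (u:ℤ) = 2*(α:ℤ) by exact_mod_cast hα,
            show (v:ℤ) = 2*(β:ℤ)+1 by exact_mod_cast hβ]
        ring
      omega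
  have hcopZ : IsCoprime (u:ℤ) (v:ℤ) := by
    rw [Int.isCoprime_iff_gcd_eq_one, Int.gcd_natCast_natCast]; exact hcuv
  have h1 : IsCoprime ((u:ℤ)^2 - (v:ℤ)^2) (v:ℤ) := by
    have hpow : IsCoprime ((u:ℤ)^2) (v:ℤ) := hcopZ.pow_left
    have := hpow.add_mul_left_left (-(v:ℤ))
    have he : (u:ℤ)^2 + (v:ℤ)*(-(v:ℤ)) = (u:ℤ)^2 - (v:ℤ)^2 := by ring
    rwa [he] at this
  have h2 : IsCoprime ((u:ℤ)^2 - (v:ℤ)^2) (u:ℤ) := by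
    have hpow : IsCoprime (-(v:ℤ)^2) (u:ℤ) := (hcopZ.symm.pow_left).neg_left
    have := hpow.add_mul_left_left (u:ℤ)
    have he : -(v:ℤ)^2 + (u:ℤ)*(u:ℤ) = (u:ℤ)^2 - (v:ℤ)^2 := by ring
    rwa [he] at this
  have hgcd : Int.gcd ((u:ℤ)^2 - (v:ℤ)^2) ((u:ℤ)*(v:ℤ)) = 1 := by
    rw [← Int.isCoprime_iff_gcd_eq_one]
    exact h2.mul_right h1
  have hZpos : (0:ℤ) < Z := by exact_mod_cast hZ1
  obtain ⟨m, n, hxe, hye, hze, hmncop, hmnpar, hm0⟩ :=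
    htrip.coprime_classification' hgcd hxodd hZpos
  set M := m.natAbs with hM
  set N := n.natAbs with hN
  have hMN : u * v = 2 * (M * N) := by
    have h5 := congrArg Int.natAbs hye
    rw [show (2:ℤ)*m*n = 2*(m*n) by ring] at h5
    rw [Int.natAbs_mul, Int.natAbs_mul, Int.natAbs_mul] at h5
    rw [Int.natAbs_natCast, Int.natAbs_natCast] at h5
    norm_num at h5
    exact h5
  have hMNcop : Nat.Coprime M N := hmncop
  have huv1 : 0 < u * v := Nat.mul_pos huq hv1
  have hM1 : 1 ≤ M := by
    rcases Nat.eq_zero_or_pos M with h0 | h1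
    · exfalso; rw [h0, zero_mul, mul_zero] at hMN; omega
    · exact h1
  have hN1 : 1 ≤ N := by
    rcases Nat.eq_zero_or_pos N with h0 | h1
    · exfalso; rw [h0, mul_zero, mul_zero] at hMN; omega
    · exact h1
  have hMsq : ((M:ℤ))^2 = m^2 := Int.natAbs_sq m
  have hNsq : ((N:ℤ))^2 = n^2 := Int.natAbs_sq n
  have hsumZ : ((u:ℤ))^2 + ((N:ℤ))^2 = ((v:ℤ))^2 + ((M:ℤ))^2 := by
    rw [hMsq, hNsq]
    linarith [hxe]
  have hkey : ∃ g h e : ℕ, Nat.Coprime g h ∧ 1 ≤ g ∧ 1 ≤ h ∧ g ≠ h ∧ 1 ≤ e ∧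
      e ≤ u ∧ e^2 = g^4 + 14*g^2*h^2 + h^4 := by
    rcases hpar with ⟨h1', h2'⟩ | ⟨h1', h2'⟩
    · -- u odd : A = u, B = v
      have hsum' : u^2 + N^2 = v^2 + M^2 := by exact_mod_cast hsumZ
      obtain ⟨g, h, e, a1, a2, a3, a4, a5, a6, a7⟩ :=
        descent_core u v M N h1' hcuv hMNcop hM1 hN1 hMN (Or.inl (by omega))
      exact ⟨g, h, e, a1, a2, a3, a4, a5, a6, a7⟩
    · -- v odd : A = v, B = u
      have hsum' : u^2 + N^2 = v^2 + M^2 := by exact_mod_cast hsumZ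
      obtain ⟨g, h, e, a1, a2, a3, a4, a5, a6, a7⟩ :=
        descent_core v u M N h2' hcuv.symm hMNcop hM1 hN1
          (by rw [mul_comm]; exact hMN) (Or.inr (by omega))
      exact ⟨g, h, e, a1, a2, a3, a4, a5, le_trans a6 (by omega), a7⟩
  obtain ⟨g, h, e, hgh, hg1, hh1, hgne, he1, heA, hF⟩ := hkey
  -- e < Y = 4Z
  have hpY : (q+2*v)^2 ≤ 2*(2*Z) := by
    by_contra hcon
    push_neg at hcon
    have h7 : (2*(2*Z))^2 < ((q+2*v)^2)^2 :=
      Nat.pow_lt_pow_left hcon (by norm_num)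
    have h8 : ((q+2*v)^2)^2 = (q+2*v)^4 := by ring
    have h9 : 1 ≤ q^4 := Nat.one_le_pow _ _ hq
    have h10 : 0 ≤ 14*(q+2*v)^2*q^2 := Nat.zero_le _
    omega
  have hppow : (q+2*v) ≤ (q+2*v)^2 := Nat.le_self_pow (by norm_num) _
  have heY : e < 2*(2*Z) := by omega
  rcases IH e heY g h hgh hF with h0 | h0 | h0 <;> omega

lemma quartic_nat : ∀ Y p q : ℕ, Nat.Coprime p q →
    Y^2 = p^4 + 14*p^2*q^2 + q^4 → p = 0 ∨ q = 0 ∨ p = q := by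
  intro Y
  induction Y using Nat.strong_induction_on with
  | _ Y IH =>
    intro p q hcop hY
    by_contra hcon
    push_neg at hcon
    obtain ⟨hp0, hq0, hpq⟩ := hcon
    have hp1 : 1 ≤ p := Nat.pos_of_ne_zero hp0
    have hq1 : 1 ≤ q := Nat.pos_of_ne_zero hq0
    have IH' : ∀ Y' < Y, ∀ p' q' : ℕ, Nat.Coprime p' q' →
        Y'^2 = p'^4 + 14*p'^2*q'^2 + q'^4 → p' = 0 ∨ q' = 0 ∨ p' = q' :=
      fun Y' hY' => IH Y' hY'
    have hYsymm : Y^2 = q^4 + 14*q^2*p^2 + p^4 := by rw [hY]; ring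
    rcases Nat.even_or_odd p with hpe | hpo
    · rcases Nat.even_or_odd q with hqe | hqo
      · obtain ⟨x, hx⟩ := hpe
        obtain ⟨y, hy⟩ := hqe
        have h2 : (2:ℕ) ∣ Nat.gcd p q := Nat.dvd_gcd ⟨x, by omega⟩ ⟨y, by omega⟩
        rw [hcop] at h2
        omega
      · exact mixed_case Y q p IH' hcop.symm hYsymm hq1 hp1
          (Nat.odd_iff.mp hqo) (Nat.even_iff.mp hpe)
    · rcases Nat.even_or_odd q with hqe | hqo
      · exact mixed_case Y p q IH' hcop hY hp1 hq1
          (Nat.odd_iff.mp hpo) (Nat.even_iff.mp hqe)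
      · rcases lt_trichotomy q p with hlt | heq | hgt
        · exact oddodd_case Y p q IH' hcop hY hq1 hlt
            (Nat.odd_iff.mp hpo) (Nat.odd_iff.mp hqo)
        · exact hpq heq.symm
        · exact oddodd_case Y q p IH' hcop.symm hYsymm hp1 hgt
            (Nat.odd_iff.mp hqo) (Nat.odd_iff.mp hpo)

theorem stmt_16 (s y : ℚ) (h : y ^ 2 = s ^ 4 + 14 * s ^ 2 + 1) :
    (s, y) = (0, 1) ∨ (s, y) = (0, -1) ∨ (s, y) = (1, 4) ∨ (s, y) = (1, -4) ∨
      (s, y) = (-1, 4) ∨ (s, y) = (-1, -4) := by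
  have hd0 : ((s.den : ℚ)) ≠ 0 := by
    exact_mod_cast (Nat.cast_ne_zero (R := ℚ)).mpr s.den_nz
  have hsd : s * (s.den : ℚ) = (s.num : ℚ) := by
    nth_rewrite 1 [← Rat.num_div_den s]
    exact div_mul_cancel₀ _ hd0
  have ht : (y * (s.den:ℚ)^2)^2
      = (s.num:ℚ)^4 + 14*(s.num:ℚ)^2*(s.den:ℚ)^2 + (s.den:ℚ)^4 := by
    have h1 : (y * (s.den:ℚ)^2)^2 = (s^4 + 14*s^2 + 1) * (s.den:ℚ)^4 := by
      rw [← h]; ring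
    calc (y * (s.den:ℚ)^2)^2
        = (s*(s.den:ℚ))^4 + 14*(s*(s.den:ℚ))^2*(s.den:ℚ)^2 + (s.den:ℚ)^4 := by
          rw [h1]; ring
      _ = (s.num:ℚ)^4 + 14*(s.num:ℚ)^2*(s.den:ℚ)^2 + (s.den:ℚ)^4 := by rw [hsd]
  have htden : (y * (s.den:ℚ)^2).den = 1 := by
    have h2 : ((y * (s.den:ℚ)^2) * (y * (s.den:ℚ)^2)).den = 1 := by
      have h3 : (y * (s.den:ℚ)^2) * (y * (s.den:ℚ)^2)
          = ((s.num^4 + 14*s.num^2*(s.den:ℤ)^2 + (s.den:ℤ)^4 : ℤ) : ℚ) := by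
        push_cast
        rw [← ht]; ring
      rw [h3]
      exact Rat.den_intCast _
    rw [Rat.mul_self_den] at h2
    exact Nat.eq_one_of_mul_eq_one_right h2
  obtain ⟨T, hT⟩ : ∃ T : ℤ, (y * (s.den:ℚ)^2) = (T:ℚ) := by
    refine ⟨(y * (s.den:ℚ)^2).num, ?_⟩
    conv_lhs => rw [← Rat.num_div_den (y * (s.den:ℚ)^2)]
    rw [htden]
    simp
  have hTZ : T^2 = s.num^4 + 14*s.num^2*(s.den:ℤ)^2 + (s.den:ℤ)^4 := by
    have h4 := ht
    rw [hT] at h4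
    exact_mod_cast h4
  have habs4 : ∀ k : ℤ, ((k.natAbs:ℤ))^4 = k^4 := by
    intro k
    have h5 : (((k.natAbs:ℤ))^2)^2 = (k^2)^2 := by rw [Int.natAbs_sq]
    calc ((k.natAbs:ℤ))^4 = (((k.natAbs:ℤ))^2)^2 := by ring
      _ = (k^2)^2 := h5
      _ = k^4 := by ring
  have hNat : (T.natAbs)^2
      = (s.num.natAbs)^4 + 14*(s.num.natAbs)^2*s.den^2 + s.den^4 := by
    have h6 : ((T.natAbs:ℤ))^2
        = ((s.num.natAbs:ℤ))^4 + 14*((s.num.natAbs:ℤ))^2*(s.den:ℤ)^2 + (s.den:ℤ)^4 := by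
      rw [Int.natAbs_sq, habs4, Int.natAbs_sq, hTZ]
    exact_mod_cast h6
  rcases quartic_nat T.natAbs s.num.natAbs s.den s.reduced hNat with h0 | h0 | h0
  · -- s = 0
    have hn0 : s.num = 0 := Int.natAbs_eq_zero.mp h0
    have hs0 : s = 0 := Rat.zero_iff_num_zero.mpr hn0
    rw [hs0] at h
    have h7 : (y - 1) * (y + 1) = 0 := by linear_combination h
    rcases mul_eq_zero.mp h7 with h8 | h8
    · left
      have : y = 1 := by linarith [h8]
      rw [hs0, this]
    · right; left
      have : y = -1 := by linarith [h8]
      rw [hs0, this]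
  · exact absurd h0 s.den_nz
  · -- |num| = den
    rcases Int.natAbs_eq s.num with he | he
    · have hs1 : s = 1 := by
        rw [← Rat.num_div_den s, he, h0]
        field_simp
        norm_cast
      rw [hs1] at h
      norm_num at h
      have h7 : (y - 4) * (y + 4) = 0 := by linear_combination h
      rcases mul_eq_zero.mp h7 with h8 | h8
      · right; right; left
        have : y = 4 := by linarith [h8]
        rw [hs1, this]
      · right; right; right; left
        have : y = -4 := by linarith [h8]
        rw [hs1, this]
    · have hs1 : s = -1 := by
        rw [← Rat.num_div_den s, he, h0]
        push_cast
        field_simp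
      rw [hs1] at h
      norm_num at h
      have h7 : (y - 4) * (y + 4) = 0 := by linear_combination h
      rcases mul_eq_zero.mp h7 with h8 | h8
      · right; right; right; right; left
        have : y = 4 := by linarith [h8]
        rw [hs1, this]
      · right; right; right; right; right
        have : y = -4 := by linarith [h8]
        rw [hs1, this]
end

section
/- If k, y ∈ ℚ satisfy y² = k³ + k² + k, then k = 0 and y = 0. -/
/-! Auxiliary lemmas for the descent proof that `y² = k³ + k² + k` has only the
rational point `(0,0)`.  The key arithmetic fact is that
`p⁴ + p²q² + q⁴ = r²` has no solutions in nonzero coprime integers. -/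

private lemma intPrime {ℓ : ℕ} (hp : ℓ.Prime) : Prime (ℓ : ℤ) :=
  Int.prime_iff_natAbs_prime.mpr (by simpa using hp)

private lemma int_coprime_of_prime {X Y : ℤ}
    (h : ∀ ℓ : ℕ, ℓ.Prime → (ℓ : ℤ) ∣ X → (ℓ : ℤ) ∣ Y → False) : IsCoprime X Y := by
  rw [Int.isCoprime_iff_gcd_eq_one]
  by_contra hg
  obtain ⟨ℓ, hpr, hd⟩ := Nat.exists_prime_and_dvd hg
  exact h ℓ hpr ((Int.natCast_dvd_natCast.mpr hd).trans (Int.gcd_dvd_left _ _))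
    ((Int.natCast_dvd_natCast.mpr hd).trans (Int.gcd_dvd_right _ _))

private lemma not_isUnit_of_prime {ℓ : ℕ} (hp : ℓ.Prime) : ¬ IsUnit (ℓ : ℤ) := by
  intro h
  rcases Int.isUnit_iff.mp h with h1 | h1 <;>
  · have := hp.two_le
    omega

private lemma odd_sq_mod8 {p : ℤ} (h : p % 2 = 1) : p ^ 2 % 8 = 1 := by
  obtain ⟨k, rfl⟩ : ∃ k, p = 2 * k + 1 := ⟨p / 2, by omega⟩
  obtain ⟨m, hm⟩ := Int.even_mul_succ_self k
  have h2 : (2 * k + 1) ^ 2 = 4 * (m + m) + 1 := by rw [← hm]; ring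
  omega

private lemma sq_mod8 (r : ℤ) : r ^ 2 % 8 = 0 ∨ r ^ 2 % 8 = 1 ∨ r ^ 2 % 8 = 4 := by
  obtain ⟨a, b, hb0, hb4, rfl⟩ : ∃ a b, 0 ≤ b ∧ b < 4 ∧ r = 4 * a + b :=
    ⟨r / 4, r % 4, by omega, by omega, by omega⟩
  obtain ⟨C, hC⟩ : ∃ C, (4 * a + b) ^ 2 = 8 * C + b ^ 2 := ⟨2 * a ^ 2 + a * b, by ring⟩
  interval_cases b <;> rw [hC] <;> norm_num <;> omega

private lemma sq_odd_of_odd {a : ℤ} (h : a ^ 2 % 2 = 1) : a % 2 = 1 := by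
  rcases (by omega : a % 2 = 0 ∨ a % 2 = 1) with h0 | h0
  · obtain ⟨c, rfl⟩ : ∃ c, a = 2 * c := ⟨a / 2, by omega⟩
    obtain ⟨C, hC⟩ : ∃ C, (2 * c) ^ 2 = 2 * C := ⟨2 * c ^ 2, by ring⟩
    omega
  · exact h0

private lemma odd_sq_of_odd {a : ℤ} (h : a % 2 = 1) : a ^ 2 % 2 = 1 := by
  have := odd_sq_mod8 h
  omega

private lemma sq_parity (x : ℤ) : x ^ 2 % 2 = x % 2 := by
  rcases (by omega : x % 2 = 0 ∨ x % 2 = 1) with h | h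
  · obtain ⟨c, rfl⟩ : ∃ c, x = 2 * c := ⟨x / 2, by omega⟩
    obtain ⟨K, hK⟩ : ∃ K, (2 * c) ^ 2 = 2 * K := ⟨2 * c ^ 2, by ring⟩
    omega
  · obtain ⟨c, rfl⟩ : ∃ c, x = 2 * c + 1 := ⟨x / 2, by omega⟩
    obtain ⟨K, hK⟩ : ∃ K, (2 * c + 1) ^ 2 = 2 * K + 1 := ⟨2 * c ^ 2 + 2 * c, by ring⟩
    omega

/-- No solution with both `p q` odd.  -/
private lemma quartic_mod4 {p q r : ℤ} (hp : p % 2 = 1) (hq : q % 2 = 1)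
    (heq : p ^ 4 + p ^ 2 * q ^ 2 + q ^ 4 = r ^ 2) : False := by
  have h1 := odd_sq_mod8 hp
  have h2 := odd_sq_mod8 hq
  have h3 := sq_mod8 r
  obtain ⟨P, hP⟩ : ∃ P, p ^ 2 = 8 * P + 1 := ⟨(p ^ 2 - 1) / 8, by omega⟩
  obtain ⟨Q, hQ⟩ : ∃ Q, q ^ 2 = 8 * Q + 1 := ⟨(q ^ 2 - 1) / 8, by omega⟩
  obtain ⟨C, hC⟩ : ∃ C, r ^ 2 = 8 * C + 3 :=
    ⟨8 * P ^ 2 + 2 * P + 8 * P * Q + P + Q + 8 * Q ^ 2 + 2 * Q, by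
      rw [← heq, show p ^ 4 = (p ^ 2) ^ 2 by ring, hP]
      rw [show q ^ 4 = (q ^ 2) ^ 2 by ring, hQ]
      ring⟩
  omega

/-- Splitting a coprime product which is a fourth power. -/
private lemma coprime_mul_fourth {a b q : ℤ} (ha : 0 < a) (hb : 0 < b)
    (hco : IsCoprime a b) (h : a * b = q ^ 4) :
    ∃ e f : ℤ, 0 < e ∧ 0 < f ∧ a = e ^ 4 ∧ b = f ^ 4 ∧ q ^ 2 = e ^ 2 * f ^ 2 := by
  obtain ⟨u0, hu0⟩ := Int.sq_of_isCoprime hco (show a * b = (q ^ 2) ^ 2 by rw [h]; ring)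
  obtain ⟨v0, hv0⟩ := Int.sq_of_isCoprime hco.symm
    (show b * a = (q ^ 2) ^ 2 by rw [mul_comm, h]; ring)
  have hu : a = |u0| ^ 2 := by
    rcases hu0 with h' | h'
    · rw [h', sq_abs]
    · nlinarith [sq_nonneg u0]
  have hv : b = |v0| ^ 2 := by
    rcases hv0 with h' | h'
    · rw [h', sq_abs]
    · nlinarith [sq_nonneg v0]
  set u := |u0| with hu_def
  set v := |v0| with hv_def
  have hu_pos : 0 < u := by nlinarith [abs_nonneg u0]
  have hv_pos : 0 < v := by nlinarith [abs_nonneg v0]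
  have hcuv : IsCoprime u v := by
    have : IsCoprime (u ^ 2) (v ^ 2) := by rwa [hu, hv] at hco
    exact ((IsCoprime.pow_left_iff two_pos).mp ((IsCoprime.pow_right_iff two_pos).mp this))
  have huv : u * v = q ^ 2 := by
    have h1 : (u * v) ^ 2 = (q ^ 2) ^ 2 := by
      have : u ^ 2 * v ^ 2 = q ^ 4 := by rw [← hu, ← hv, h]
      nlinarith [this]
    exact (pow_left_inj₀ (by positivity) (sq_nonneg q) (two_ne_zero)).mp h1
  obtain ⟨e0, he0⟩ := Int.sq_of_isCoprime hcuv huv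
  obtain ⟨f0, hf0⟩ := Int.sq_of_isCoprime hcuv.symm (by rw [mul_comm, huv])
  have he : u = |e0| ^ 2 := by
    rcases he0 with h' | h'
    · rw [h', sq_abs]
    · nlinarith [sq_nonneg e0]
  have hf : v = |f0| ^ 2 := by
    rcases hf0 with h' | h'
    · rw [h', sq_abs]
    · nlinarith [sq_nonneg f0]
  refine ⟨|e0|, |f0|, ?_, ?_, ?_, ?_, ?_⟩
  · nlinarith [abs_nonneg e0]
  · nlinarith [abs_nonneg f0]
  · rw [hu, he]; ring
  · rw [hv, hf]; ring
  · rw [← huv, he, hf]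

private lemma size_bound {e f r m n : ℤ} (h4r : 4 * r = 3 * e ^ 4 + f ^ 4)
    (he : e = m ^ 2 + n ^ 2) (hm : 1 ≤ m ^ 2) (hn : 1 ≤ n ^ 2) (hf : 1 ≤ f ^ 4) :
    m ^ 2 - n ^ 2 < r ∧ -(m ^ 2 - n ^ 2) < r := by
  have he2 : 2 ≤ e := by omega
  have he4 : 8 * e ≤ e ^ 4 := by nlinarith [sq_nonneg e, sq_nonneg (e - 2)]
  constructor <;> linarith

set_option maxHeartbeats 2000000 in
private lemma descent {p q r : ℤ} (hp0 : 0 < p) (hq0 : 0 < q) (hr0 : 0 < r)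
    (hco : IsCoprime p q) (hp2 : p % 2 = 0) (hq2 : q % 2 = 1)
    (heq : p ^ 4 + p ^ 2 * q ^ 2 + q ^ 4 = r ^ 2) :
    ∃ s t w : ℤ, IsCoprime s t ∧ s ≠ 0 ∧ t ≠ 0 ∧
      s ^ 4 + s ^ 2 * t ^ 2 + t ^ 4 = w ^ 2 ∧ w.natAbs < r.natAbs := by
  have hq2_8 := odd_sq_mod8 hq2
  set A : ℤ := 2 * p ^ 2 + q ^ 2 with hA
  have hApos : 0 < A := by positivity
  have hA2 : A % 2 = 1 := by omega
  have hfac : (2 * r - A) * (2 * r + A) = 3 * q ^ 4 := by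
    rw [hA]; linear_combination (-4) * heq
  have hq4pos : 0 < 3 * q ^ 4 := by positivity
  have h2rApos : 0 < 2 * r + A := by positivity
  have h2rmpos : 0 < 2 * r - A := by
    rcases mul_pos_iff.mp (hfac ▸ hq4pos) with ⟨h1, _⟩ | ⟨_, h2⟩
    · exact h1
    · linarith
  -- the two factors are coprime
  have hcofac : IsCoprime (2 * r - A) (2 * r + A) := by
    apply int_coprime_of_prime
    intro ℓ hℓ hd1 hd2
    have hℓZ := intPrime hℓ
    have hodd : ℓ ≠ 2 := by
      intro rfl2
      obtain ⟨c, hc⟩ := hd1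
      subst rfl2
      omega
    have hdA : (ℓ : ℤ) ∣ A := by
      have h2A : (ℓ : ℤ) ∣ 2 * A := by
        have : (2 : ℤ) * A = (2 * r + A) - (2 * r - A) := by ring
        rw [this]; exact dvd_sub hd2 hd1
      rcases hℓZ.dvd_mul.mp h2A with h | h
      · exfalso; apply hodd
        have := Int.natCast_dvd_natCast.mp (by exact_mod_cast h : (ℓ : ℤ) ∣ ((2 : ℕ) : ℤ))
        exact (Nat.prime_dvd_prime_iff_eq hℓ Nat.prime_two).mp this
      · exact h
    have hdq : (ℓ : ℤ) ∣ q := by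
      have hd3q : (ℓ : ℤ) ∣ 3 * q ^ 4 := by
        rw [← hfac]; exact hd1.mul_right _
      rcases hℓZ.dvd_mul.mp hd3q with h | h
      · -- ℓ = 3 : then 9 divides 3q⁴ hence 3 ∣ q
        have hℓ3 : ℓ = 3 := by
          have := Int.natCast_dvd_natCast.mp (by exact_mod_cast h : (ℓ : ℤ) ∣ ((3 : ℕ) : ℤ))
          exact (Nat.prime_dvd_prime_iff_eq hℓ Nat.prime_three).mp this
        subst hℓ3
        have h9 : (9 : ℤ) ∣ 3 * q ^ 4 := by
          rw [← hfac]
          exact mul_dvd_mul (by exact_mod_cast hd1) (by exact_mod_cast hd2)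
        obtain ⟨c, hc⟩ := h9
        have hq4 : q ^ 4 = 3 * c := by linarith
        have : (3 : ℤ) ∣ q ^ 4 := ⟨c, hq4⟩
        exact_mod_cast Int.prime_three.dvd_of_dvd_pow this
      · exact_mod_cast hℓZ.dvd_of_dvd_pow h
    have hdp : (ℓ : ℤ) ∣ p := by
      have hdq2 : (ℓ : ℤ) ∣ q ^ 2 := hdq.pow (by norm_num)
      have hd2p2 : (ℓ : ℤ) ∣ 2 * p ^ 2 := by
        have : 2 * p ^ 2 = A - q ^ 2 := by rw [hA]; ring
        rw [this]; exact dvd_sub hdA hdq2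
      rcases hℓZ.dvd_mul.mp hd2p2 with h | h
      · exfalso; apply hodd
        have := Int.natCast_dvd_natCast.mp (by exact_mod_cast h : (ℓ : ℤ) ∣ ((2 : ℕ) : ℤ))
        exact (Nat.prime_dvd_prime_iff_eq hℓ Nat.prime_two).mp this
      · exact_mod_cast hℓZ.dvd_of_dvd_pow h
    exact not_isUnit_of_prime hℓ (hco.isUnit_of_dvd' hdp hdq)
  -- 3 divides one of the factors
  have h3dvd : (3 : ℤ) ∣ (2 * r - A) ∨ (3 : ℤ) ∣ (2 * r + A) := by
    have : (3 : ℤ) ∣ (2 * r - A) * (2 * r + A) := by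
      rw [hfac]; exact Dvd.intro _ rfl
    exact Int.prime_three.dvd_mul.mp this
  rcases h3dvd with hcase | hcase
  · -- impossible case : 2r - A = 3f⁴, 2r + A = e⁴, contradiction mod 16
    exfalso
    obtain ⟨G, hG⟩ := hcase
    have hGpos : 0 < G := by linarith
    have hGfac : G * (2 * r + A) = q ^ 4 := by
      have h3 : (3 : ℤ) * (G * (2 * r + A)) = 3 * q ^ 4 := by
        rw [← hfac, hG]; ring
      linarith
    have hcoG : IsCoprime G (2 * r + A) := by
      have : IsCoprime (3 * G) (2 * r + A) := by rwa [hG] at hcofac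
      exact this.of_mul_left_right
    obtain ⟨f, e, hf0, he0, hGf4, hAe4, hqef⟩ := coprime_mul_fourth hGpos h2rApos hcoG hGfac
    -- parities
    have heodd : e % 2 = 1 := by
      apply sq_odd_of_odd; apply sq_odd_of_odd
      have h4 : (e ^ 2) ^ 2 = e ^ 4 := by ring
      rw [h4, ← hAe4]; omega
    have hfodd : f % 2 = 1 := by
      apply sq_odd_of_odd; apply sq_odd_of_odd
      have h4 : (f ^ 2) ^ 2 = f ^ 4 := by ring
      have : 3 * f ^ 4 = 2 * r - A := by rw [hG, hGf4]
      omega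
    obtain ⟨p1, rfl⟩ : ∃ k, p = 2 * k := ⟨p / 2, by omega⟩
    have hp16 : 16 * p1 ^ 2 = e ^ 4 - 2 * e ^ 2 * f ^ 2 - 3 * f ^ 4 := by
      have h2A : 2 * A = e ^ 4 - 3 * f ^ 4 := by
        rw [← hAe4, ← hGf4]
        linarith [hG]
      rw [hA] at h2A
      have hq2ef : q ^ 2 = f ^ 2 * e ^ 2 := hqef
      linear_combination h2A - 2 * hq2ef
    obtain ⟨M, hM⟩ : ∃ M, e ^ 2 = 8 * M + 1 := ⟨(e ^ 2 - 1) / 8, by have := odd_sq_mod8 heodd; omega⟩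
    obtain ⟨N, hN⟩ : ∃ N, f ^ 2 = 8 * N + 1 := ⟨(f ^ 2 - 1) / 8, by have := odd_sq_mod8 hfodd; omega⟩
    have h1 : e ^ 4 = (8 * M + 1) ^ 2 := by rw [← hM]; ring
    have h2 : e ^ 2 * f ^ 2 = (8 * M + 1) * (8 * N + 1) := by rw [hM, hN]
    have h3 : f ^ 4 = (8 * N + 1) ^ 2 := by rw [← hN]; ring
    obtain ⟨C, hC⟩ : ∃ C, 16 * p1 ^ 2 = 16 * C - 4 :=
      ⟨4 * M ^ 2 - 8 * M * N - 12 * N ^ 2 - 4 * N, by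
        linear_combination hp16 + h1 - 2 * h2 - 3 * h3⟩
    omega
  · -- main case : 2r + A = 3e⁴, 2r - A = f⁴
    obtain ⟨E, hE⟩ := hcase
    have hEpos : 0 < E := by linarith
    have hEfac : (2 * r - A) * E = q ^ 4 := by
      have h3 : (3 : ℤ) * ((2 * r - A) * E) = 3 * q ^ 4 := by
        rw [← hfac, hE]; ring
      linarith
    have hcoE : IsCoprime (2 * r - A) E := by
      have : IsCoprime (2 * r - A) (3 * E) := by rwa [hE] at hcofac
      exact this.of_mul_right_right
    obtain ⟨f, e, hf0, he0, hGf4, hEe4, hqef⟩ := coprime_mul_fourth h2rmpos hEpos hcoE hEfac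
    -- parities
    have hfodd : f % 2 = 1 := by
      apply sq_odd_of_odd; apply sq_odd_of_odd
      have h4 : (f ^ 2) ^ 2 = f ^ 4 := by ring
      rw [h4, ← hGf4]; omega
    have heodd : e % 2 = 1 := by
      apply sq_odd_of_odd; apply sq_odd_of_odd
      have h4 : (e ^ 2) ^ 2 = e ^ 4 := by ring
      have h3e : 3 * e ^ 4 = 2 * r + A := by rw [hE, hEe4]
      omega
    obtain ⟨p1, rfl⟩ : ∃ k, p = 2 * k := ⟨p / 2, by omega⟩
    have hp1ne : p1 ≠ 0 := by intro h; rw [h] at hp0; norm_num at hp0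
    have hp16 : 16 * p1 ^ 2 = 3 * e ^ 4 - 2 * e ^ 2 * f ^ 2 - f ^ 4 := by
      have h2A : 2 * A = 3 * e ^ 4 - f ^ 4 := by
        rw [← hEe4, ← hGf4]
        linarith [hE]
      rw [hA] at h2A
      have hq2ef : q ^ 2 = f ^ 2 * e ^ 2 := hqef
      linear_combination h2A - 2 * hq2ef
    obtain ⟨M, hM⟩ : ∃ M, e ^ 2 = 8 * M + 1 := ⟨(e ^ 2 - 1) / 8, by have := odd_sq_mod8 heodd; omega⟩
    obtain ⟨N, hN⟩ : ∃ N, f ^ 2 = 8 * N + 1 := ⟨(f ^ 2 - 1) / 8, by have := odd_sq_mod8 hfodd; omega⟩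
    set P : ℤ := 6 * M + 2 * N + 1 with hPdef
    set R : ℤ := 2 * M - 2 * N with hRdef
    have hP4 : 3 * e ^ 2 + f ^ 2 = 4 * P := by rw [hM, hN, hPdef]; ring
    have hR4 : e ^ 2 - f ^ 2 = 4 * R := by rw [hM, hN, hRdef]; ring
    have hPR : p1 ^ 2 = P * R := by
      have h16 : 16 * p1 ^ 2 = 16 * (P * R) := by
        have hexp : (3 * e ^ 2 + f ^ 2) * (e ^ 2 - f ^ 2) = 3 * e ^ 4 - 2 * e ^ 2 * f ^ 2 - f ^ 4 := by
          ring
        rw [hp16, ← hexp, hP4, hR4]; ring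
      linarith
    have hPpos : 0 < P := by
      have he2pos : 0 < e ^ 2 := by positivity
      have hf2pos : 0 < f ^ 2 := by positivity
      omega
    have hRpos : 0 < R := by
      have hPRpos : 0 < P * R := by rw [← hPR]; positivity
      by_contra hR
      push_neg at hR
      have := mul_nonpos_of_nonneg_of_nonpos hPpos.le hR
      linarith
    have hPodd : P % 2 = 1 := by omega
    have hcoef : IsCoprime (e ^ 2) (f ^ 2) := by
      have h1 : IsCoprime (f ^ 4) (e ^ 4) := by rwa [hGf4, hEe4] at hcoE
      have h2 : IsCoprime f e :=
        (IsCoprime.pow_left_iff (by norm_num)).mp ((IsCoprime.pow_right_iff (by norm_num)).mp h1)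
      exact h2.symm.pow
    have hcoPR : IsCoprime P R := by
      apply int_coprime_of_prime
      intro ℓ hℓ hd1 hd2
      have hℓZ := intPrime hℓ
      have hodd : ℓ ≠ 2 := by
        intro rfl2
        obtain ⟨c, hc⟩ := hd1
        subst rfl2
        omega
      have hde2 : (ℓ : ℤ) ∣ e ^ 2 := by
        have h4e : (4 : ℤ) * e ^ 2 = 4 * P + 4 * R := by
          rw [← hP4, ← hR4]; ring
        have : (ℓ : ℤ) ∣ 4 * e ^ 2 := by
          rw [h4e]
          exact dvd_add (Dvd.dvd.mul_left hd1 4) (Dvd.dvd.mul_left hd2 4)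
        rcases hℓZ.dvd_mul.mp this with h | h
        · exfalso
          have h4 : (ℓ : ℤ) ∣ 2 * 2 := by norm_num at h ⊢; exact_mod_cast h
          rcases hℓZ.dvd_mul.mp h4 with h' | h' <;>
          · apply hodd
            have := Int.natCast_dvd_natCast.mp (by exact_mod_cast h' : (ℓ : ℤ) ∣ ((2 : ℕ) : ℤ))
            exact (Nat.prime_dvd_prime_iff_eq hℓ Nat.prime_two).mp this
        · exact h
      have hdf2 : (ℓ : ℤ) ∣ f ^ 2 := by
        have h4f : (4 : ℤ) * f ^ 2 = 4 * P - 3 * (4 * R) := by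
          rw [← hP4, ← hR4]; ring
        have : (ℓ : ℤ) ∣ 4 * f ^ 2 := by
          rw [h4f]
          exact dvd_sub (Dvd.dvd.mul_left hd1 4) (Dvd.dvd.mul_left (Dvd.dvd.mul_left hd2 4) 3)
        rcases hℓZ.dvd_mul.mp this with h | h
        · exfalso
          have h4 : (ℓ : ℤ) ∣ 2 * 2 := by norm_num at h ⊢; exact_mod_cast h
          rcases hℓZ.dvd_mul.mp h4 with h' | h' <;>
          · apply hodd
            have := Int.natCast_dvd_natCast.mp (by exact_mod_cast h' : (ℓ : ℤ) ∣ ((2 : ℕ) : ℤ))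
            exact (Nat.prime_dvd_prime_iff_eq hℓ Nat.prime_two).mp this
        · exact h
      exact not_isUnit_of_prime hℓ (hcoef.isUnit_of_dvd' hde2 hdf2)
    -- P = a², R = b²
    obtain ⟨a0, ha0⟩ := Int.sq_of_isCoprime hcoPR hPR.symm
    obtain ⟨b0, hb0⟩ := Int.sq_of_isCoprime hcoPR.symm (by rw [mul_comm]; exact hPR.symm)
    have hPa : P = |a0| ^ 2 := by
      rcases ha0 with h' | h'
      · rw [h', sq_abs]
      · exfalso; have := sq_nonneg a0; omega
    have hRb : R = |b0| ^ 2 := by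
      rcases hb0 with h' | h'
      · rw [h', sq_abs]
      · exfalso; have := sq_nonneg b0; omega
    set a : ℤ := |a0| with ha_def
    set b : ℤ := |b0| with hb_def
    have ha_ne : a ≠ 0 := by
      intro h0; rw [h0] at hPa; simp at hPa; omega
    have hb_ne : b ≠ 0 := by
      intro h0; rw [h0] at hRb; simp at hRb; omega
    have ha_pos : 0 < a := lt_of_le_of_ne (abs_nonneg a0) (Ne.symm ha_ne)
    have hb_pos : 0 < b := lt_of_le_of_ne (abs_nonneg b0) (Ne.symm hb_ne)
    have hcoab : IsCoprime a b := by
      have : IsCoprime (a ^ 2) (b ^ 2) := by rwa [hPa, hRb] at hcoPR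
      exact (IsCoprime.pow_left_iff two_pos).mp ((IsCoprime.pow_right_iff two_pos).mp this)
    have hea : e ^ 2 = a ^ 2 + b ^ 2 := by
      have h4 : 4 * e ^ 2 = 4 * (a ^ 2 + b ^ 2) := by
        have := hP4
        have := hR4
        rw [hPa] at hP4
        rw [hRb] at hR4
        linarith
      linarith
    have hfab : f ^ 2 = a ^ 2 - 3 * b ^ 2 := by
      have h4 : 4 * f ^ 2 = 4 * (a ^ 2 - 3 * b ^ 2) := by
        rw [hPa] at hP4
        rw [hRb] at hR4
        linarith
      linarith
    have ha_odd : a % 2 = 1 := by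
      apply sq_odd_of_odd
      rw [← hPa]  -- a² = P odd
      omega
    have hb_even : b % 2 = 0 := by
      rcases (by omega : b % 2 = 0 ∨ b % 2 = 1) with h' | h'
      · exact h'
      · exfalso
        have := odd_sq_of_odd h'
        rw [← hRb] at this
        omega
    have he_pos : 0 < e := he0
    -- Pythagorean triple
    have hPT : PythagoreanTriple a b e := by
      show a * a + b * b = e * e
      linear_combination -hea
    have hgcdab : Int.gcd a b = 1 := Int.isCoprime_iff_gcd_eq_one.mp hcoab
    obtain ⟨m, n, ha_mn, hb_mn, he_mn, hmn_gcd, hmn_par, _hm_nonneg⟩ :=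
      hPT.coprime_classification' hgcdab ha_odd he_pos
    have hmn_pos : 0 < m * n := by
      have : 2 * (m * n) = b := by rw [hb_mn]; ring
      omega
    have hm_ne : m ≠ 0 := by intro h; rw [h] at hmn_pos; simp at hmn_pos
    have hn_ne : n ≠ 0 := by intro h; rw [h] at hmn_pos; simp at hmn_pos
    have hcomn : IsCoprime m n := Int.isCoprime_iff_gcd_eq_one.mpr hmn_gcd
    -- f² = C * D
    have hCD : (m ^ 2 + 4 * m * n + n ^ 2) * (m ^ 2 - 4 * m * n + n ^ 2) = f ^ 2 := by
      rw [ha_mn, hb_mn] at hfab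
      linear_combination -hfab
    -- C, D odd
    have hm2n2_odd : (m ^ 2 + n ^ 2) % 2 = 1 := by
      have h1 := sq_parity m
      have h2 := sq_parity n
      rcases hmn_par with ⟨h3, h4⟩ | ⟨h3, h4⟩ <;> omega
    obtain ⟨K4, hK4⟩ : ∃ K, 4 * m * n = 2 * K := ⟨2 * m * n, by ring⟩
    have hC_odd : (m ^ 2 + 4 * m * n + n ^ 2) % 2 = 1 := by omega
    have hD_odd : (m ^ 2 - 4 * m * n + n ^ 2) % 2 = 1 := by omega
    -- C, D coprime
    have hcoCD : IsCoprime (m ^ 2 + 4 * m * n + n ^ 2) (m ^ 2 - 4 * m * n + n ^ 2) := by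
      apply int_coprime_of_prime
      intro ℓ hℓ hd1 hd2
      have hℓZ := intPrime hℓ
      have hodd : ℓ ≠ 2 := by
        intro rfl2
        obtain ⟨c, hc⟩ := hd1
        subst rfl2
        omega
      have hdsum : (ℓ : ℤ) ∣ m ^ 2 + n ^ 2 := by
        have h2 : (ℓ : ℤ) ∣ 2 * (m ^ 2 + n ^ 2) := by
          have heq2 : 2 * (m ^ 2 + n ^ 2) =
              (m ^ 2 + 4 * m * n + n ^ 2) + (m ^ 2 - 4 * m * n + n ^ 2) := by ring
          rw [heq2]; exact dvd_add hd1 hd2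
        rcases hℓZ.dvd_mul.mp h2 with h | h
        · exfalso; apply hodd
          have := Int.natCast_dvd_natCast.mp (by exact_mod_cast h : (ℓ : ℤ) ∣ ((2 : ℕ) : ℤ))
          exact (Nat.prime_dvd_prime_iff_eq hℓ Nat.prime_two).mp this
        · exact h
      have hdmn : (ℓ : ℤ) ∣ m * n := by
        have h8 : (ℓ : ℤ) ∣ 8 * (m * n) := by
          have heq8 : 8 * (m * n) =
              (m ^ 2 + 4 * m * n + n ^ 2) - (m ^ 2 - 4 * m * n + n ^ 2) := by ring
          rw [heq8]; exact dvd_sub hd1 hd2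
        have h2ll : ¬ ((ℓ : ℤ) ∣ 2) := by
          intro h
          apply hodd
          have := Int.natCast_dvd_natCast.mp (by exact_mod_cast h : (ℓ : ℤ) ∣ ((2 : ℕ) : ℤ))
          exact (Nat.prime_dvd_prime_iff_eq hℓ Nat.prime_two).mp this
        have h8' : (8 : ℤ) * (m * n) = 2 * (2 * (2 * (m * n))) := by ring
        rw [h8'] at h8
        rcases hℓZ.dvd_mul.mp h8 with h | h
        · exact absurd h h2ll
        rcases hℓZ.dvd_mul.mp h with h' | h'
        · exact absurd h' h2ll
        rcases hℓZ.dvd_mul.mp h' with h'' | h''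
        · exact absurd h'' h2ll
        · exact h''
      rcases hℓZ.dvd_mul.mp hdmn with h | h
      · have hdn : (ℓ : ℤ) ∣ n := by
          have : (ℓ : ℤ) ∣ n ^ 2 := by
            have heqn : n ^ 2 = (m ^ 2 + n ^ 2) - m * m := by ring
            rw [heqn]; exact dvd_sub hdsum (h.mul_right m)
          exact hℓZ.dvd_of_dvd_pow this
        exact not_isUnit_of_prime hℓ (hcomn.isUnit_of_dvd' h hdn)
      · have hdm : (ℓ : ℤ) ∣ m := by
          have : (ℓ : ℤ) ∣ m ^ 2 := by
            have heqm : m ^ 2 = (m ^ 2 + n ^ 2) - n * n := by ring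
            rw [heqm]; exact dvd_sub hdsum (h.mul_right n)
          exact hℓZ.dvd_of_dvd_pow this
        exact not_isUnit_of_prime hℓ (hcomn.isUnit_of_dvd' hdm h)
    -- C, D positive
    have hf_ne : f ≠ 0 := by intro h; rw [h] at hfodd; norm_num at hfodd
    have hCDpos : 0 < (m ^ 2 + 4 * m * n + n ^ 2) * (m ^ 2 - 4 * m * n + n ^ 2) := by
      have h0 : 0 < f ^ 2 := by positivity
      rwa [← hCD] at h0
    have hm2n2_pos : 0 < m ^ 2 + n ^ 2 := by positivity
    have hsumCD : (m ^ 2 + 4 * m * n + n ^ 2) + (m ^ 2 - 4 * m * n + n ^ 2) = 2 * (m ^ 2 + n ^ 2) := by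
      ring
    have hC_pos : 0 < m ^ 2 + 4 * m * n + n ^ 2 := by
      rcases mul_pos_iff.mp hCDpos with ⟨h1, _⟩ | ⟨h1, h2⟩
      · exact h1
      · exfalso; linarith
    have hD_pos : 0 < m ^ 2 - 4 * m * n + n ^ 2 := by
      rcases mul_pos_iff.mp hCDpos with ⟨_, h2⟩ | ⟨h1, h2⟩
      · exact h2
      · exfalso; linarith
    -- C = c², D = d²
    obtain ⟨c0, hc0⟩ := Int.sq_of_isCoprime hcoCD hCD
    obtain ⟨d0, hd0⟩ := Int.sq_of_isCoprime hcoCD.symm (by rw [mul_comm]; exact hCD)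
    have hCc : m ^ 2 + 4 * m * n + n ^ 2 = |c0| ^ 2 := by
      rcases hc0 with h' | h'
      · rw [h', sq_abs]
      · exfalso; have h1 := sq_nonneg c0; omega
    have hDd : m ^ 2 - 4 * m * n + n ^ 2 = |d0| ^ 2 := by
      rcases hd0 with h' | h'
      · rw [h', sq_abs]
      · exfalso; have h1 := sq_nonneg d0; omega
    set c : ℤ := |c0| with hc_def
    set d : ℤ := |d0| with hd_def
    have hc_odd : c % 2 = 1 := by
      apply sq_odd_of_odd; rw [← hCc]; omega
    have hd_odd : d % 2 = 1 := by
      apply sq_odd_of_odd; rw [← hDd]; omega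
    obtain ⟨s, t, hs, ht⟩ : ∃ s t, c = s + t ∧ d = s - t :=
      ⟨(c + d) / 2, (c - d) / 2, by omega, by omega⟩
    rw [hs] at hCc
    rw [ht] at hDd
    have hst_eq : s ^ 2 + t ^ 2 = m ^ 2 + n ^ 2 := by
      have h2 : 2 * (s ^ 2 + t ^ 2) = 2 * (m ^ 2 + n ^ 2) := by
        linear_combination -hCc - hDd
      linarith
    have hst2 : s * t = 2 * (m * n) := by
      have h4 : 4 * (s * t) = 4 * (2 * (m * n)) := by
        linear_combination hDd - hCc
      linarith
    have hs_ne : s ≠ 0 := by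
      intro h; rw [h] at hst2; simp at hst2; omega
    have ht_ne : t ≠ 0 := by
      intro h; rw [h] at hst2; simp at hst2; omega
    have hcocd : IsCoprime ((s + t) ^ 2) ((s - t) ^ 2) := by rwa [hCc, hDd] at hcoCD
    have hcost : IsCoprime s t := by
      apply int_coprime_of_prime
      intro ℓ hℓ hd1 hd2
      have hdc : (ℓ : ℤ) ∣ (s + t) ^ 2 := (dvd_add hd1 hd2).pow (by norm_num)
      have hdd : (ℓ : ℤ) ∣ (s - t) ^ 2 := (dvd_sub hd1 hd2).pow (by norm_num)
      exact not_isUnit_of_prime hℓ (hcocd.isUnit_of_dvd' hdc hdd)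
    refine ⟨s, t, m ^ 2 - n ^ 2, hcost, hs_ne, ht_ne, ?_, ?_⟩
    · linear_combination (s ^ 2 + t ^ 2 + m ^ 2 + n ^ 2) * hst_eq -
        (s * t + 2 * (m * n)) * hst2
    · -- size estimate
      have h4r : 4 * r = 3 * e ^ 4 + f ^ 4 := by
        rw [← hEe4, ← hGf4]
        linarith [hE]
      have hm1 : 1 ≤ m ^ 2 := by
        have hx : 0 < m ^ 2 := by positivity
        omega
      have hn1 : 1 ≤ n ^ 2 := by
        have hx : 0 < n ^ 2 := by positivity
        omega
      have hf1 : 1 ≤ f ^ 4 := by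
        have hx : 0 < f ^ 4 := by positivity
        omega
      have he_eq : e = m ^ 2 + n ^ 2 := by rw [he_mn]
      obtain ⟨hbound1, hbound2⟩ := size_bound h4r he_eq hm1 hn1 hf1
      have h1 : (m ^ 2 - n ^ 2).natAbs < r.natAbs := by
        rcases Int.natAbs_eq (m ^ 2 - n ^ 2) with h | h <;>
          rcases Int.natAbs_eq r with h' | h' <;> omega
      exact h1

private lemma quartic_aux : ∀ N : ℕ, ∀ p q r : ℤ, r.natAbs = N → IsCoprime p q → p ≠ 0 → q ≠ 0 →
    p ^ 4 + p ^ 2 * q ^ 2 + q ^ 4 ≠ r ^ 2 := by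
  intro N
  induction N using Nat.strong_induction_on with
  | _ N IH =>
    intro p q r hN hco hp hq heq
    have habs4 : ∀ x : ℤ, |x| ^ 4 = x ^ 4 := fun x => by
      rw [show |x| ^ 4 = (|x| ^ 2) ^ 2 by ring, sq_abs]; ring
    have habs2 : ∀ x : ℤ, |x| ^ 2 = x ^ 2 := fun x => sq_abs x
    have heq' : |p| ^ 4 + |p| ^ 2 * |q| ^ 2 + |q| ^ 4 = |r| ^ 2 := by
      rw [habs4, habs4, habs2, habs2, habs2, heq]
    have hco' : IsCoprime |p| |q| := by
      rw [Int.isCoprime_iff_gcd_eq_one] at hco ⊢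
      rwa [Int.gcd, Int.natAbs_abs, Int.natAbs_abs]
    have hp' : 0 < |p| := abs_pos.mpr hp
    have hq' : 0 < |q| := abs_pos.mpr hq
    have hr : r ≠ 0 := by
      intro h0
      rw [h0] at heq
      have h1 : 0 < p ^ 4 + p ^ 2 * q ^ 2 + q ^ 4 := by positivity
      simp at heq
      omega
    have hr' : 0 < |r| := abs_pos.mpr hr
    have hsmall : ∀ s t w : ℤ, IsCoprime s t → s ≠ 0 → t ≠ 0 →
        s ^ 4 + s ^ 2 * t ^ 2 + t ^ 4 = w ^ 2 → w.natAbs < |r|.natAbs → False := by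
      intro s t w hc hs ht he hlt
      rw [Int.natAbs_abs] at hlt
      exact IH w.natAbs (hN ▸ hlt) s t w rfl hc hs ht he
    rcases (by omega : |p| % 2 = 0 ∨ |p| % 2 = 1) with hP | hP <;>
      rcases (by omega : |q| % 2 = 0 ∨ |q| % 2 = 1) with hQ | hQ
    · -- both even : contradicts coprimality
      have h2p : (2 : ℤ) ∣ |p| := by omega
      have h2q : (2 : ℤ) ∣ |q| := by omega
      have := hco'.isUnit_of_dvd' h2p h2q
      rw [Int.isUnit_iff] at this
      omega
    · -- p even, q odd : descent
      obtain ⟨s, t, w, hc, hs, ht, he, hlt⟩ := descent hp' hq' hr' hco' hP hQ heq'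
      exact hsmall s t w hc hs ht he hlt
    · -- p odd, q even : descent with roles swapped
      have heq'' : |q| ^ 4 + |q| ^ 2 * |p| ^ 2 + |p| ^ 4 = |r| ^ 2 := by linarith
      obtain ⟨s, t, w, hc, hs, ht, he, hlt⟩ := descent hq' hp' hr' hco'.symm hQ hP heq''
      exact hsmall s t w hc hs ht he hlt
    · -- both odd : impossible mod 8
      exact quartic_mod4 hP hQ heq'

private lemma quartic {p q r : ℤ} (hco : IsCoprime p q) (hp : p ≠ 0) (hq : q ≠ 0) :
    p ^ 4 + p ^ 2 * q ^ 2 + q ^ 4 ≠ r ^ 2 :=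
  quartic_aux r.natAbs p q r rfl hco hp hq

theorem stmt_17 (k y : ℚ) (h : y ^ 2 = k ^ 3 + k ^ 2 + k) : k = 0 ∧ y = 0 := by
  by_cases hk : k = 0
  · subst hk
    refine ⟨rfl, ?_⟩
    have : y ^ 2 = 0 := by rw [h]; ring
    exact pow_eq_zero_iff (by norm_num) |>.mp this
  · exfalso
    set a : ℤ := k.num with ha_def
    set b : ℤ := (k.den : ℤ) with hb_def
    have hb_pos : 0 < b := by
      rw [hb_def]
      exact_mod_cast k.pos
    have ha_ne : a ≠ 0 := by
      intro h0
      exact hk (Rat.num_eq_zero.mp h0)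
    have hk_eq : (k : ℚ) = (a : ℚ) / (b : ℚ) := by
      rw [ha_def, hb_def]
      exact_mod_cast (Rat.num_div_den k).symm
    have hcoab : IsCoprime a b := by
      rw [Int.isCoprime_iff_gcd_eq_one]
      exact k.reduced
    -- Y = y * b² is an integer
    set Y : ℚ := y * (b : ℚ) ^ 2 with hY_def
    have hbQ : ((b : ℚ)) ≠ 0 := by positivity
    have hkey : y ^ 2 * (b : ℚ) ^ 4 = (a : ℚ) * (b : ℚ) * ((a : ℚ) ^ 2 + (a : ℚ) * (b : ℚ) + (b : ℚ) ^ 2) := by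
      rw [h, hk_eq]
      field_simp
    have hY2 : Y * Y = ((a * b * (a ^ 2 + a * b + b ^ 2) : ℤ) : ℚ) := by
      rw [hY_def]
      push_cast
      linear_combination hkey
    have hYden : Y.den = 1 := by
      have h1 : (Y * Y).den = 1 := by rw [hY2]; exact Rat.den_intCast _
      rw [Rat.mul_self_den] at h1
      exact Nat.eq_one_of_mul_eq_one_left h1
    obtain ⟨c, hc⟩ : ∃ c : ℤ, (c : ℚ) = Y := ⟨Y.num, by
      rw [← Rat.den_eq_one_iff]; exact hYden⟩
    have hcZ : c ^ 2 = a * b * (a ^ 2 + a * b + b ^ 2) := by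
      have : (c : ℚ) ^ 2 = ((a * b * (a ^ 2 + a * b + b ^ 2) : ℤ) : ℚ) := by
        rw [hc, sq]; exact hY2
      exact_mod_cast this
    set F : ℤ := a ^ 2 + a * b + b ^ 2 with hF_def
    have hF_pos : 0 < F := by nlinarith [sq_nonneg (2 * a + b), sq_nonneg b]
    -- coprimality of a, b with F
    have hcoaF : IsCoprime a F := by
      have h1 : IsCoprime a (b ^ 2) := hcoab.pow_right
      have h2 := h1.add_mul_left_right (a + b)
      have : b ^ 2 + a * (a + b) = F := by rw [hF_def]; ring
      rwa [this] at h2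
    have hcobF : IsCoprime b F := by
      have h1 : IsCoprime b (a ^ 2) := hcoab.symm.pow_right
      have h2 := h1.add_mul_left_right (a + b)
      have : a ^ 2 + b * (a + b) = F := by rw [hF_def]; ring
      rwa [this] at h2
    -- a must be positive
    have ha_pos : 0 < a := by
      rcases lt_trichotomy a 0 with hneg | hzero | hpos
      · exfalso
        have h1 : a * b * F < 0 := by
          apply mul_neg_of_neg_of_pos _ hF_pos
          exact mul_neg_of_neg_of_pos hneg hb_pos
        nlinarith [sq_nonneg c]
      · exact absurd hzero ha_ne
      · exact hpos
    -- split into squares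
    have hcoabF : IsCoprime (a * b) F := hcoaF.mul_left hcobF
    obtain ⟨t0, ht0⟩ := Int.sq_of_isCoprime hcoabF.symm
      (show F * (a * b) = c ^ 2 by rw [mul_comm]; exact hcZ.symm)
    have hFt : F = |t0| ^ 2 := by
      rcases ht0 with h' | h'
      · rw [h', sq_abs]
      · exfalso; have := sq_nonneg t0; omega
    obtain ⟨w0, hw0⟩ := Int.sq_of_isCoprime hcoabF hcZ.symm
    have hab_sq : a * b = |w0| ^ 2 := by
      rcases hw0 with h' | h'
      · rw [h', sq_abs]
      · exfalso
        have h1 : 0 < a * b := mul_pos ha_pos hb_pos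
        have := sq_nonneg w0
        omega
    obtain ⟨u0, hu0⟩ := Int.sq_of_isCoprime hcoab (hab_sq.trans (by rw [sq_abs]))
    have ha_sq : a = |u0| ^ 2 := by
      rcases hu0 with h' | h'
      · rw [h', sq_abs]
      · exfalso; have := sq_nonneg u0; omega
    obtain ⟨v0, hv0⟩ := Int.sq_of_isCoprime hcoab.symm
      (show b * a = |w0| ^ 2 by rw [mul_comm]; exact hab_sq.trans (by rw [sq_abs]))
    have hb_sq : b = |v0| ^ 2 := by
      rcases hv0 with h' | h'
      · rw [h', sq_abs]
      · exfalso; have := sq_nonneg v0; omega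
    -- final contradiction via the quartic theorem
    have hu_ne : |u0| ≠ 0 := by
      intro h0; rw [h0] at ha_sq; simp at ha_sq; omega
    have hv_ne : |v0| ≠ 0 := by
      intro h0; rw [h0] at hb_sq; simp at hb_sq; omega
    have hcouv : IsCoprime |u0| |v0| := by
      have : IsCoprime (|u0| ^ 2) (|v0| ^ 2) := by rwa [ha_sq, hb_sq] at hcoab
      exact (IsCoprime.pow_left_iff two_pos).mp ((IsCoprime.pow_right_iff two_pos).mp this)
    apply quartic hcouv hu_ne hv_ne (r := |t0|)
    have hfin : (|u0| ^ 2) ^ 2 + |u0| ^ 2 * |v0| ^ 2 + (|v0| ^ 2) ^ 2 = |t0| ^ 2 := by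
      rw [← ha_sq, ← hb_sq, ← hFt]
    linear_combination hfin
end
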